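/- arXiv:2003.12242 — 7 statements merged into one kernel-verified Lean document; each statement's English description precedes it below -/
import Mathlib

section
/- For every integer s < 0 and every d ≥ 0, one has the identity S_d(s) = (−1)^d · Σ_{(m_0, …, m_d) ∈ U_d(−s)} C(−s; m_0, …, m_d) · t^{wt(m)} in A, where C(−s; m_0, …, m_d) = (−s)!/(m_0! ⋯ m_d!) is the multinomial coefficient reduced modulo p; moreover every multinomial coefficient appearing in this sum is nonzero modulo p (by Lucas' theorem, since the m_i sum to −s with no base-p carrying). -/
open Polynomial

/-- The power sum `S_d(-k) = ∑_{a monic, deg a = d} a^k`, written as a sum over the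
lower-order coefficients of the monic polynomial. -/
noncomputable def powerSum (Fq : Type) [Field Fq] [Fintype Fq] (d k : ℕ) : Polynomial Fq :=
  ∑ c : Fin d → Fq, (X ^ d + ∑ i : Fin d, C (c i) * X ^ (i : ℕ)) ^ k

/-- `m` sums to `k` with no carrying of digits in base `p`. -/
def NoCarry (p : ℕ) {n : ℕ} (m : Fin n → ℕ) (k : ℕ) : Prop :=
  (∑ i, m i) = k ∧ ∀ j : ℕ, (∑ i, m i / p ^ j % p) = k / p ^ j % p

/-- The set `U_d(k)`. -/
def Uset (p q d k : ℕ) : Set (Fin (d + 1) → ℕ) :=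
  {m | NoCarry p m k ∧ ∀ i : Fin (d + 1), 0 < (i : ℕ) → 0 < m i ∧ (q - 1) ∣ m i}

/-- The weight of an element of `U_d(k)`. -/
def wtU {d : ℕ} (m : Fin (d + 1) → ℕ) : ℕ :=
  ∑ i : Fin (d + 1), (d - (i : ℕ)) * m i

/-- Strict lexicographic order on tuples. -/
def LexLT {n : ℕ} (x y : Fin n → ℕ) : Prop :=
  ∃ i, (∀ j, j < i → x j = y j) ∧ x i < y i

/-- Lexicographic order on tuples. -/
def LexLE {n : ℕ} (x y : Fin n → ℕ) : Prop := x = y ∨ LexLT x y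

/-- `L_k := min_{0 ≤ i < f} l(k p^i)/(q-1)` where `l` is the base-`q` digit sum, `q = p^f`. -/
noncomputable def Lval (p f k : ℕ) (hf : 0 < f) : ℚ :=
  (Finset.range f).inf' ⟨0, Finset.mem_range.mpr hf⟩
    (fun i => ((Nat.digits (p ^ f) (k * p ^ i)).sum : ℚ) / ((p : ℚ) ^ f - 1))

/-- The set `W_d(N)` of compositions. -/
def Wset (p q d N : ℕ) : Set (Fin d → ℕ) :=
  {Y | NoCarry p Y N ∧ ∀ i : Fin d, (i : ℕ) + 1 < d → 0 < Y i ∧ (q - 1) ∣ Y i}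

/-- The weight of a composition. -/
def wtW {d : ℕ} (Y : Fin d → ℕ) : ℕ := ∑ i : Fin d, ((i : ℕ) + 1) * Y i

/-- `X` is the modest (lexicographically largest) composition in `W_d(N)`. -/
def Modest (p q : ℕ) {d : ℕ} (N : ℕ) (X : Fin d → ℕ) : Prop :=
  X ∈ Wset p q d N ∧ ∀ Y ∈ Wset p q d N, LexLE Y X

/-- `X` is an optimal (minimum weight) composition in `W_d(N)`. -/
def Optimal (p q : ℕ) {d : ℕ} (N : ℕ) (X : Fin d → ℕ) : Prop :=
  X ∈ Wset p q d N ∧ ∀ Y ∈ Wset p q d N, wtW X ≤ wtW Y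

/-- `Γ(n) : Fin f → ℕ`, summing the base-`p` digits of `n` in each residue class mod `f`. -/
def Gamma (p f n : ℕ) : Fin f → ℕ :=
  fun i => ∑ j ∈ Finset.range (Nat.log p n + 1), if j % f = (i : ℕ) then n / p ^ j % p else 0

/-- The cyclic matrix `E`, as a map: `(E x)_i = p x_{i+1} - x_i`, indices mod `f`. -/
def Emap (p : ℕ) {R : Type} [Ring R] {f : ℕ} (x : Fin f → R) : Fin f → R :=
  fun i => (p : R) * x ⟨((i : ℕ) + 1) % f, Nat.mod_lt _ i.pos⟩ - x i

/-- `𝔍 = {Γ(n) : n > 0 is q-even}`, where `q = p ^ f`. -/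
def Jfrak (p f : ℕ) : Set (Fin f → ℕ) :=
  {w | ∃ n : ℕ, 0 < n ∧ (p ^ f - 1) ∣ n ∧ Gamma p f n = w}

/-- `I_d`. -/
def Iset (p f d : ℕ) : Set (Fin f → ℕ) :=
  {u | (∃ n : ℕ, 0 < n ∧ Gamma p f n = u) ∧
    ∃ v : Fin (d - 1) → Fin f → ℕ, (∀ j, v j ∈ Jfrak p f) ∧ (∑ j, v j) < u}

/-- `J_d`. -/
def Jset (p f d : ℕ) : Set (Fin f → ℕ) :=
  if d = 0 then ∅ else Jfrak p f ∩ (Iset p f d \ Iset p f (d + 1))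

/-- A composition is `τ`-monotonic. -/
def TauMonotonic (p f : ℕ) {d : ℕ} (X : Fin d → ℕ) : Prop :=
  ∀ i j : Fin d, i < j → ∀ m n : ℕ, X i / p ^ m % p ≠ 0 → X j / p ^ n % p ≠ 0 →
    m % f = n % f → n ≤ m

/-- `W_d^B(N)`: compositions in `W_d(N)` whose `Γ`-matrix is `B`. -/
def WBset (p f d N : ℕ) (B : Fin d → Fin f → ℕ) : Set (Fin d → ℕ) :=
  {Y | Y ∈ Wset p (p ^ f) d N ∧ ∀ j, Gamma p f (Y j) = B j}

/-- The multizeta value `ζ(-k_1, …, -k_r)` as a (finite) sum over strictly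
decreasing tuples of degrees. -/
noncomputable def multizeta (Fq : Type) [Field Fq] [Fintype Fq] {r : ℕ} (k : Fin r → ℕ) :
    Polynomial Fq :=
  ∑ᶠ (dt : Fin r → ℕ) (_ : StrictAnti dt), ∏ i, powerSum Fq (dt i) (k i)


/-!
Write a monic `a` of degree `d` as `∑ i, c i * t ^ (d - i)` with `c 0 = 1`. The multinomial
theorem expands `a ^ k` over the tuples `m` with `∑ m i = k`, with coefficient
`multinomial m * ∏ i, c i ^ m i` in front of `t ^ wtU m`. Summing over the free coefficients
`c 1, …, c d` factors into the sums `∑ x : 𝔽_q, x ^ m i`, which are `-1` when `m i > 0` is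
`q`-even and `0` otherwise. By Legendre's formula `v_p (multinomial m)` is
`∑ j, (k / p ^ j - ∑ i, m i / p ^ j)`, a sum of nonnegative terms, so the multinomial coefficient
is a unit mod `p` exactly when the `m i` add up to `k` without carrying.
-/

open Finset

section NoCarry

variable {ι : Type*} (s : Finset ι) (m : ι → ℕ) {p : ℕ}

lemma sum_div_le_div_sum (c : ℕ) : ∑ i ∈ s, m i / c ≤ (∑ i ∈ s, m i) / c := by
  rcases Nat.eq_zero_or_pos c with rfl | hc
  · simp
  rw [Nat.le_div_iff_mul_le hc, sum_mul]
  exact sum_le_sum fun i _ => Nat.div_mul_le_self _ _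

lemma sum_div_eq_div_sum_of_lt {c : ℕ} (hc : ∑ i ∈ s, m i < c) :
    ∑ i ∈ s, m i / c = (∑ i ∈ s, m i) / c := by
  rw [Nat.div_eq_of_lt hc]
  exact sum_eq_zero fun i hi =>
    Nat.div_eq_of_lt ((single_le_sum (fun _ _ => Nat.zero_le _) hi).trans_lt hc)

lemma factorization_multinomial_add_sum_div_pow (hp : p.Prime) :
    (Nat.multinomial s m).factorization p +
        ∑ j ∈ Ico 1 (∑ i ∈ s, m i + 1), ∑ i ∈ s, m i / p ^ j =
      ∑ j ∈ Ico 1 (∑ i ∈ s, m i + 1), (∑ i ∈ s, m i) / p ^ j := by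
  set K := ∑ i ∈ s, m i
  have legendre : ∀ n ≤ K, n.factorial.factorization p = ∑ j ∈ Ico 1 (K + 1), n / p ^ j :=
    fun n hn => Nat.factorization_factorial hp ((Nat.log_le_self p n).trans_lt (by omega))
  have hspec := congrArg (fun n => n.factorization p) (Nat.multinomial_spec s m)
  rw [Nat.factorization_mul (prod_ne_zero_iff.2 fun i _ => (m i).factorial_ne_zero)
      (Nat.multinomial_pos s m).ne', Finsupp.add_apply,
    Nat.factorization_prod fun i _ => (m i).factorial_ne_zero, Finsupp.finsetSum_apply] at hspec
  rw [← legendre K le_rfl, ← hspec, sum_comm, add_comm]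
  congr 1
  exact sum_congr rfl fun i hi => (legendre _ (single_le_sum (fun _ _ => Nat.zero_le _) hi)).symm

lemma not_dvd_multinomial_iff_sum_div_pow_eq (hp : p.Prime) :
    ¬ p ∣ Nat.multinomial s m ↔ ∀ j, ∑ i ∈ s, m i / p ^ j = (∑ i ∈ s, m i) / p ^ j := by
  have hfac := factorization_multinomial_add_sum_div_pow s m hp
  have hle : ∀ j ∈ Ico 1 (∑ i ∈ s, m i + 1), ∑ i ∈ s, m i / p ^ j ≤ (∑ i ∈ s, m i) / p ^ j :=
    fun j _ => sum_div_le_div_sum s m _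
  have hnd : ¬ p ∣ Nat.multinomial s m ↔ (Nat.multinomial s m).factorization p = 0 := by
    simp [Nat.factorization_eq_zero_iff, hp, (Nat.multinomial_pos s m).ne']
  rw [hnd]
  constructor
  · intro h0 j
    rw [h0, zero_add] at hfac
    rcases Nat.eq_zero_or_pos j with rfl | hj
    · simp
    by_cases hjK : j < ∑ i ∈ s, m i + 1
    · exact (sum_eq_sum_iff_of_le hle).1 hfac j (mem_Ico.2 ⟨hj, hjK⟩)
    · exact sum_div_eq_div_sum_of_lt s m
        ((Nat.lt_pow_self hp.one_lt).trans_le (Nat.pow_le_pow_right hp.pos (by omega)))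
  · intro h
    rw [sum_congr rfl fun j _ => h j] at hfac
    omega

lemma sum_div_pow_eq_iff_sum_digit_eq (hp : 1 < p) :
    (∀ j, ∑ i ∈ s, m i / p ^ j = (∑ i ∈ s, m i) / p ^ j) ↔
      ∀ j, ∑ i ∈ s, m i / p ^ j % p = (∑ i ∈ s, m i) / p ^ j % p := by
  set K := ∑ i ∈ s, m i
  have digit : ∀ x j, x / p ^ j % p + p * (x / p ^ (j + 1)) = x / p ^ j := fun x j => by
    rw [pow_succ, ← Nat.div_div_eq_div_mul]
    exact Nat.mod_add_div _ _
  have digit_sum : ∀ j, ∑ i ∈ s, m i / p ^ j % p + p * ∑ i ∈ s, m i / p ^ (j + 1) =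
      ∑ i ∈ s, m i / p ^ j := fun j => by
    rw [mul_sum, ← sum_add_distrib]
    exact sum_congr rfl fun i _ => digit (m i) j
  constructor
  · intro h j
    have hK := digit K j
    have hm := digit_sum j
    rw [h j, h (j + 1)] at hm
    omega
  · intro h j
    rcases le_or_gt j K with hj | hj
    · induction hj using Nat.decreasingInduction with
      | self => exact sum_div_eq_div_sum_of_lt s m (Nat.lt_pow_self hp)
      | of_succ j _ ih =>
        have hK := digit K j
        have hm := digit_sum j
        have hj := h j
        rw [ih] at hm
        omega
    · exact sum_div_eq_div_sum_of_lt s m ((Nat.lt_pow_self hp).trans (Nat.pow_lt_pow_right hp hj))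

end NoCarry

theorem noCarry_iff {p : ℕ} (hp : p.Prime) {n : ℕ} (m : Fin n → ℕ) (k : ℕ) :
    NoCarry p m k ↔ ∑ i, m i = k ∧ ¬ p ∣ Nat.multinomial univ m := by
  rw [not_dvd_multinomial_iff_sum_div_pow_eq _ _ hp, sum_div_pow_eq_iff_sum_digit_eq _ _ hp.one_lt]
  constructor <;> rintro ⟨rfl, h⟩ <;> exact ⟨rfl, h⟩

lemma FiniteField.sum_pow_eq_ite (K : Type*) [Field K] [Fintype K] (e : ℕ) :
    ∑ x : K, x ^ e = if 0 < e ∧ Fintype.card K - 1 ∣ e then -1 else 0 := by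
  classical
  rcases Nat.eq_zero_or_pos e with rfl | he
  · simp
  rw [if_congr (and_iff_right he) rfl rfl, ← FiniteField.sum_pow_units,
    Fintype.sum_eq_add_sum_compl 0, zero_pow he.ne', zero_add]
  exact sum_bij' (fun x hx => Units.mk0 x (by simpa using hx)) (fun u _ => u)
    (by simp) (by simp) (by simp) (by simp) (by simp)

lemma monic_eq_sum_cons_rev {R : Type*} [CommSemiring R] (d : ℕ) (c : Fin d → R) :
    X ^ d + ∑ i : Fin d, C (c i) * X ^ (i : ℕ) =
      ∑ i : Fin (d + 1), C ((Fin.cons 1 (c ∘ Fin.rev) : Fin (d + 1) → R) i) * X ^ (d - i) := by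
  rw [Fin.sum_univ_succ, ← Fintype.sum_equiv Fin.revPerm _ _ fun _ => rfl]
  simp [Fin.val_rev]

lemma prod_C_mul_X_pow_pow {R ι : Type*} [CommSemiring R] (s : Finset ι) (a : ι → R)
    (e m : ι → ℕ) :
    ∏ i ∈ s, (C (a i) * X ^ e i) ^ m i = C (∏ i ∈ s, a i ^ m i) * X ^ ∑ i ∈ s, e i * m i := by
  simp only [mul_pow, ← C_pow, ← pow_mul, prod_mul_distrib, ← map_prod, prod_pow_eq_pow_sum]

lemma powerSum_eq_sum_cons (Fq : Type) [Field Fq] [Fintype Fq] (d k : ℕ) :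
    powerSum Fq d k =
      ∑ c : Fin d → Fq, (∑ i, C ((Fin.cons 1 c : Fin (d + 1) → Fq) i) * X ^ (d - i)) ^ k := by
  simp_rw [powerSum, monic_eq_sum_cons_rev]
  exact Fintype.sum_equiv (Fin.revPerm.arrowCongr (Equiv.refl Fq)) _ _ fun c => rfl

lemma powerSum_eq_sum_piAntidiag (Fq : Type) [Field Fq] [Fintype Fq] (d k : ℕ) :
    powerSum Fq d k = ∑ m ∈ piAntidiag univ k, (Nat.multinomial univ m : Fq[X]) *
      C (∑ c : Fin d → Fq, ∏ i, (Fin.cons 1 c : Fin (d + 1) → Fq) i ^ m i) * X ^ wtU m := by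
  simp_rw [powerSum_eq_sum_cons, sum_pow_eq_sum_piAntidiag, prod_C_mul_X_pow_pow]
  rw [sum_comm]
  refine sum_congr rfl fun m _ => ?_
  rw [map_sum, mul_sum, sum_mul, wtU]
  simp only [mul_assoc]

lemma sum_prod_cons_one_pow (K : Type*) [Field K] [Fintype K] {d : ℕ} (m : Fin (d + 1) → ℕ) :
    ∑ c : Fin d → K, ∏ i, (Fin.cons 1 c : Fin (d + 1) → K) i ^ m i =
      if ∀ j : Fin d, 0 < m j.succ ∧ Fintype.card K - 1 ∣ m j.succ then (-1) ^ d else 0 := by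
  simp_rw [Fin.prod_univ_succ, Fin.cons_zero, Fin.cons_succ, one_pow, one_mul]
  rw [← Fintype.prod_sum fun (j : Fin d) (x : K) => x ^ m j.succ]
  simp_rw [FiniteField.sum_pow_eq_ite, Fintype.prod_ite_zero, prod_const, card_univ,
    Fintype.card_fin]

lemma Uset_eq_coe_filter {p : ℕ} (hp : p.Prime) (q d k : ℕ) :
    Uset p q d k = ↑({m ∈ piAntidiag univ k | ¬ p ∣ Nat.multinomial univ m ∧
      ∀ j : Fin d, 0 < m j.succ ∧ q - 1 ∣ m j.succ} : Finset (Fin (d + 1) → ℕ)) := by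
  ext m
  simp [Uset, noCarry_iff hp, Fin.forall_fin_succ, and_assoc]

theorem powerSum_expansion_general
    (p f : ℕ) (hp : p.Prime)
    (Fq : Type) [Field Fq] [Fintype Fq] (hcard : Fintype.card Fq = p ^ f)
    (d k : ℕ) :
    (powerSum Fq d k =
      (-1 : Polynomial Fq) ^ d *
        ∑ᶠ (m : Fin (d + 1) → ℕ) (_ : m ∈ Uset p (p ^ f) d k),
          (Nat.multinomial Finset.univ m : Polynomial Fq) * Polynomial.X ^ wtU m) ∧
    ∀ m ∈ Uset p (p ^ f) d k, (Nat.multinomial Finset.univ m : Fq) ≠ 0 := by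
  have : Fact p.Prime := ⟨hp⟩
  have : CharP Fq p := charP_of_card_eq_prime_pow hcard
  refine ⟨?_, fun m hm => ?_⟩
  · rw [Uset_eq_coe_filter hp, finsum_mem_coe_finset, powerSum_eq_sum_piAntidiag, sum_filter,
      mul_sum]
    refine sum_congr rfl fun m _ => ?_
    rw [sum_prod_cons_one_pow, hcard]
    by_cases hA : ∀ j : Fin d, 0 < m j.succ ∧ p ^ f - 1 ∣ m j.succ
    · by_cases hdvd : p ∣ Nat.multinomial univ m
      · simp [hA, hdvd, (CharP.cast_eq_zero_iff Fq[X] p _).2 hdvd]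
      · rw [if_pos hA, if_pos ⟨hdvd, hA⟩, map_pow, map_neg, map_one]
        ring
    · simp [hA]
  · rw [Ne, CharP.cast_eq_zero_iff Fq p]
    exact ((noCarry_iff hp m k).1 hm.1).2

/-- `S_d(s) = (-1)^d ∑_{m ∈ U_d(-s)} multinomial(m) t^{wt m}`, and every
multinomial coefficient occurring there is nonzero mod `p` (Lucas). -/
theorem powerSum_expansion
    (p f : ℕ) (hp : p.Prime) (hf : 0 < f)
    (Fq : Type) [Field Fq] [Fintype Fq] (hcard : Fintype.card Fq = p ^ f)
    (d k : ℕ) (hk : 0 < k) :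
    (powerSum Fq d k =
      (-1 : Polynomial Fq) ^ d *
        ∑ᶠ (m : Fin (d + 1) → ℕ) (_ : m ∈ Uset p (p ^ f) d k),
          (Nat.multinomial Finset.univ m : Polynomial Fq) * Polynomial.X ^ wtU m) ∧
    ∀ m ∈ Uset p (p ^ f) d k, (Nat.multinomial Finset.univ m : Fq) ≠ 0 :=
  powerSum_expansion_general p f hp Fq hcard d k
end

section
/- For every integer k > 0 and every d ≥ 0, the set V_d(k) := {(m_0, …, m_d) ∈ U_d(k) : m_0 > 0} is empty if and only if d ≥ L_k. -/
open Polynomial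

/-!
Record the base-`p` digits of `k` as a multiset of positions (position `j` repeated
`digit p k j` times) and reduce the positions mod `f`. For the resulting multiset `C` of residues,
the base-`q` digit sum `l(k p^i)` is the weight `∑_{x ∈ C} p^((x + i) mod f)`, and no-carry
decompositions of `k` are splittings of the positions. Since `l(n) ≡ n [MOD q - 1]`, a positive
`q`-even part contributes at least `q - 1` to every `l(k p^i)` and the part `m_0 > 0` at least `1`,
so an element of `V_d(k)` forces `d < L_k`.

Conversely, if every rotation of `C` weighs more than `d (q - 1)`, split `C` by induction on its
size. If every residue occurs at least `p - 1` times, one copy of each residue is a part of weight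
exactly `q - 1` in every rotation: remove it and lower `d`. Otherwise a carry (`p` copies of a
residue `r` become one copy of `r + 1`, which lowers a single rotation by `q - 1`) keeps the bound;
split the carried multiset and undo the carry inside the part containing `r + 1`. A splitting of
the residues lifts to one of the positions, that is, to an element of `V_d(k)`.
-/

open Finset

namespace Multiset

variable {α β : Type*} (π : α → β)

theorem exists_le_map_eq {C : Multiset β} {D : Multiset α} (h : C ≤ D.map π) :
    ∃ E ≤ D, E.map π = C := by
  induction D using Multiset.induction_on generalizing C with
  | empty => exact ⟨0, le_rfl, by simp_all⟩
  | cons a D ih =>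
    rw [map_cons] at h
    by_cases ha : π a ∈ C
    · obtain ⟨C', rfl⟩ := exists_cons_of_mem ha
      obtain ⟨E, hE, rfl⟩ := ih ((cons_le_cons_iff _).mp h)
      exact ⟨a ::ₘ E, cons_le_cons a hE, map_cons π a E⟩
    · obtain ⟨E, hE, rfl⟩ := ih ((le_cons_of_notMem ha).mp h)
      exact ⟨E, hE.trans (le_cons_self D a), rfl⟩

theorem exists_sum_map_eq {n : ℕ} {D : Multiset α} {C : Fin n → Multiset β}
    (h : ∑ t, C t = D.map π) :
    ∃ E : Fin n → Multiset α, ∑ t, E t = D ∧ ∀ t, (E t).map π = C t := by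
  induction n generalizing D with
  | zero => exact ⟨finZeroElim, by simpa [eq_comm] using h, finZeroElim⟩
  | succ n ih =>
    rw [Fin.sum_univ_succ] at h
    obtain ⟨E₀, hE₀, hmap⟩ := exists_le_map_eq π (h ▸ le_add_right (C 0) _)
    obtain ⟨D', rfl⟩ := exists_add_of_le hE₀
    rw [map_add, hmap, add_right_inj] at h
    obtain ⟨E, hsum, hE⟩ := ih h
    exact ⟨Fin.cons E₀ E, by simp [Fin.sum_univ_succ, hsum], Fin.cases hmap hE⟩

end Multiset

namespace Sheats

open Fin.CommRing

def digit (p n j : ℕ) : ℕ := n / p ^ j % p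

section Digits

variable {p : ℕ}

lemma digit_lt (hp : 0 < p) (n j : ℕ) : digit p n j < p := Nat.mod_lt _ hp

lemma digit_eq_zero_of_lt {n j : ℕ} (h : n < p ^ j) : digit p n j = 0 := by
  simp [digit, Nat.div_eq_of_lt h]

lemma digit_succ (n j : ℕ) : digit p n (j + 1) = digit p (n / p) j := by
  simp only [digit, pow_succ', Nat.div_div_eq_div_mul]

lemma digit_mul_pow_add (hp : 0 < p) (n i j : ℕ) : digit p (n * p ^ i) (i + j) = digit p n j := by
  simp only [digit, pow_add, ← Nat.div_div_eq_div_mul, Nat.mul_div_cancel _ (pow_pos hp i)]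

lemma digit_mul_pow_of_lt (hp : 0 < p) (n : ℕ) {i j : ℕ} (h : j < i) :
    digit p (n * p ^ i) j = 0 := by
  obtain ⟨c, rfl⟩ := Nat.exists_eq_add_of_lt h
  rw [digit, show n * p ^ (j + c + 1) = n * p ^ c * p * p ^ j by ring,
    Nat.mul_div_cancel _ (pow_pos hp j), Nat.mul_mod_left]

lemma mod_pow_eq_sum_digit (n J : ℕ) : n % p ^ J = ∑ j ∈ range J, digit p n j * p ^ j := by
  induction J with
  | zero => simp [Nat.mod_one]
  | succ J ih => rw [pow_succ, Nat.mod_mul, sum_range_succ, ih, digit]; ring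

lemma sum_digit_mul_pow {n J : ℕ} (h : n < p ^ J) :
    ∑ j ∈ range J, digit p n j * p ^ j = n := by
  rw [← mod_pow_eq_sum_digit, Nat.mod_eq_of_lt h]

lemma sum_range_digit_mul_eq (hp : 0 < p) {n J J' : ℕ} (h : n < p ^ J) (hJ : J ≤ J')
    (w : ℕ → ℕ) :
    ∑ j ∈ range J', digit p n j * w j = ∑ j ∈ range J, digit p n j * w j := by
  refine (sum_subset (range_subset_range.mpr hJ) fun j _ hj => ?_).symm
  rw [digit_eq_zero_of_lt (h.trans_le (Nat.pow_le_pow_right hp (by simpa using hj))), zero_mul]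

lemma digit_sum_mul_pow {c : ℕ → ℕ} (hc : ∀ j, c j < p) (J i : ℕ) :
    digit p (∑ j ∈ range J, c j * p ^ j) i = if i < J then c i else 0 := by
  induction J generalizing c i with
  | zero => simp [digit]
  | succ J ih =>
    have hsplit : ∑ j ∈ range (J + 1), c j * p ^ j =
        c 0 + p * ∑ j ∈ range J, c (j + 1) * p ^ j := by
      rw [sum_range_succ', add_comm, mul_sum]
      simp [pow_succ', mul_left_comm]
    have hp : 0 < p := (Nat.zero_le _).trans_lt (hc 0)
    rw [hsplit]
    cases i with
    | zero => simp [digit, Nat.add_mul_mod_self_left, Nat.mod_eq_of_lt (hc 0)]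
    | succ i =>
      rw [digit_succ, Nat.add_mul_div_left _ _ hp, Nat.div_eq_of_lt (hc 0), zero_add,
        ih fun j => hc (j + 1)]
      simp

end Digits

section DigitSum

variable {p f : ℕ}

lemma digits_sum_eq_sum_digit (hp : 1 < p) {n J : ℕ} (h : n < p ^ (f * J)) :
    (Nat.digits (p ^ f) n).sum = ∑ j ∈ range (f * J), digit p n j * p ^ (j % f) := by
  induction J generalizing n with
  | zero => simp_all
  | succ J ih =>
    rcases Nat.eq_zero_or_pos n with rfl | hn
    · simp [digit]
    have hq : 1 < p ^ f := Nat.one_lt_pow (by rintro rfl; rw [zero_mul, pow_zero] at h; omega) hp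
    have hdiv : n / p ^ f < p ^ (f * J) := by
      rw [Nat.div_lt_iff_lt_mul (by positivity), ← pow_add]
      simpa [mul_add, add_comm] using h
    rw [Nat.digits_def' hq hn, List.sum_cons, ih hdiv, show f * (J + 1) = f + f * J by ring,
      sum_range_add, mod_pow_eq_sum_digit]
    congr 1
    · exact sum_congr rfl fun j hj => by rw [Nat.mod_eq_of_lt (mem_range.mp hj)]
    · refine sum_congr rfl fun j _ => ?_
      rw [Nat.add_mod_left, digit, digit, pow_add, Nat.div_div_eq_div_mul]

lemma digits_sum_mul_pow (hp : 1 < p) (hf : 0 < f) {n J : ℕ} (h : n < p ^ J) (i : ℕ) :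
    (Nat.digits (p ^ f) (n * p ^ i)).sum = ∑ j ∈ range J, digit p n j * p ^ ((j + i) % f) := by
  have hni : n * p ^ i < p ^ (i + J) := by
    rw [pow_add, mul_comm]; exact Nat.mul_lt_mul_of_pos_left h (by positivity)
  rw [digits_sum_eq_sum_digit hp (hni.trans_le (Nat.pow_le_pow_right (by omega)
      (Nat.le_mul_of_pos_left _ hf))),
    sum_range_digit_mul_eq (by omega) hni (Nat.le_mul_of_pos_left _ hf), sum_range_add,
    sum_eq_zero fun j hj => by rw [digit_mul_pow_of_lt (by omega) n (mem_range.mp hj), zero_mul],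
    zero_add]
  exact sum_congr rfl fun j _ => by rw [digit_mul_pow_add (by omega), add_comm i]

end DigitSum

section DigitSumBounds

variable {b : ℕ}

lemma modEq_digits_sum_sub_one (hb : 2 ≤ b) (n : ℕ) :
    n ≡ (Nat.digits b n).sum [MOD b - 1] := by
  obtain ⟨c, rfl⟩ := Nat.exists_eq_add_of_le' hb
  rcases c with _ | c
  · exact Nat.modEq_one
  · refine Nat.modEq_digits_sum _ _ ?_ n
    rw [show c + 1 + 2 - 1 = c + 2 by omega, show c + 1 + 2 = 1 + (c + 2) by omega,
      Nat.add_mod_right, Nat.mod_eq_of_lt (by omega)]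

lemma digits_sum_pos {n : ℕ} (hn : n ≠ 0) : 0 < (Nat.digits b n).sum :=
  (Nat.pos_of_ne_zero (Nat.getLast_digit_ne_zero b hn)).trans_le
    (List.le_sum_of_mem (List.getLast_mem _))

lemma sub_one_le_digits_sum (hb : 2 ≤ b) {n : ℕ} (hn : n ≠ 0) (hd : b - 1 ∣ n) :
    b - 1 ≤ (Nat.digits b n).sum :=
  Nat.le_of_dvd (digits_sum_pos hn) (((modEq_digits_sum_sub_one hb n).dvd_iff dvd_rfl).mp hd)

end DigitSumBounds

section EasyDirection

variable {p f : ℕ}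

lemma digits_sum_mul_pow_of_noCarry (hp : 1 < p) (hf : 0 < f) {n k : ℕ} {m : Fin n → ℕ}
    (hm : NoCarry p m k) (i : ℕ) :
    (Nat.digits (p ^ f) (k * p ^ i)).sum = ∑ t, (Nat.digits (p ^ f) (m t * p ^ i)).sum := by
  have hk : k < p ^ k := Nat.lt_pow_self hp
  have hmk (t : Fin n) : m t < p ^ k :=
    (hm.1 ▸ single_le_sum (fun _ _ => Nat.zero_le _) (mem_univ t)).trans_lt hk
  simp_rw [digits_sum_mul_pow hp hf hk, digits_sum_mul_pow hp hf (hmk _)]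
  rw [sum_comm]
  refine sum_congr rfl fun j _ => ?_
  rw [← sum_mul]
  exact congrArg (· * _) (hm.2 j).symm

lemma lt_digits_sum_of_mem_Uset (hp : 1 < p) (hf : 0 < f) {d k : ℕ} {m : Fin (d + 1) → ℕ}
    (hm : m ∈ Uset p (p ^ f) d k) (hm0 : 0 < m 0) (i : ℕ) :
    d * (p ^ f - 1) < (Nat.digits (p ^ f) (k * p ^ i)).sum := by
  have hq : 2 ≤ p ^ f := Nat.one_lt_pow hf.ne' hp
  rw [digits_sum_mul_pow_of_noCarry hp hf hm.1, Fin.sum_univ_succ]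
  have h0 := digits_sum_pos (b := p ^ f) (n := m 0 * p ^ i) (by positivity)
  have hrest : d * (p ^ f - 1) ≤ ∑ t : Fin d, (Nat.digits (p ^ f) (m t.succ * p ^ i)).sum := by
    simpa using card_nsmul_le_sum univ _ _ fun (t : Fin d) _ =>
      have ⟨hpos, hdvd⟩ := hm.2 t.succ t.succ_pos
      sub_one_le_digits_sum hq (by positivity) (hdvd.mul_right _)
  omega

end EasyDirection

section CyclicWeight

variable (p : ℕ) {f : ℕ}

/-- When `C` holds the residues mod `f` of the digit positions of `n`, this is the base-`p ^ f`
digit sum of `n * p ^ i` (`digits_sum_ofPositions_mul_pow`). -/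
def cyclicWeight (C : Multiset (Fin f)) (i : Fin f) : ℕ := (C.map fun x => p ^ (x + i).val).sum

variable {p}

@[simp] lemma cyclicWeight_zero (i : Fin f) : cyclicWeight p 0 i = 0 := rfl

@[simp] lemma cyclicWeight_add (C D : Multiset (Fin f)) (i : Fin f) :
    cyclicWeight p (C + D) i = cyclicWeight p C i + cyclicWeight p D i := by
  simp [cyclicWeight]

@[simp] lemma cyclicWeight_cons (x : Fin f) (C : Multiset (Fin f)) (i : Fin f) :
    cyclicWeight p (x ::ₘ C) i = p ^ (x + i).val + cyclicWeight p C i := by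
  simp [cyclicWeight]

@[simp] lemma cyclicWeight_replicate (n : ℕ) (x i : Fin f) :
    cyclicWeight p (Multiset.replicate n x) i = n * p ^ (x + i).val := by
  simp [cyclicWeight]

lemma cyclicWeight_mono {C D : Multiset (Fin f)} (h : C ≤ D) (i : Fin f) :
    cyclicWeight p C i ≤ cyclicWeight p D i := by
  obtain ⟨E, rfl⟩ := Multiset.le_iff_exists_add.mp h
  simp

variable [NeZero f]

lemma cyclicWeight_nsmul_univ (hp : 0 < p) (i : Fin f) :
    cyclicWeight p ((p - 1) • (univ : Finset (Fin f)).val) i = p ^ f - 1 := by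
  have hshift : ∑ x : Fin f, p ^ (x + i).val = ∑ j ∈ range f, p ^ j := by
    rw [← Fin.sum_univ_eq_sum_range]
    exact Fintype.sum_equiv (Equiv.addRight i) _ _ fun _ => rfl
  have hgeom := geom_sum_mul_add (p - 1) f
  rw [Nat.sub_one_add_one hp.ne', mul_comm] at hgeom
  simp only [cyclicWeight, Multiset.map_nsmul, Multiset.sum_nsmul, smul_eq_mul]
  rw [← Finset.sum_eq_multiset_sum, hshift]
  omega

lemma mul_pow_val (hp : 0 < p) (a : Fin f) :
    p * p ^ a.val = p ^ (a + 1).val + if a = -1 then p ^ f - 1 else 0 := by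
  obtain ⟨n, rfl⟩ := Nat.exists_eq_add_one_of_ne_zero (NeZero.ne f)
  have hlast : (-1 : Fin (n + 1)) = Fin.last n := by ext; simp
  rw [Fin.val_add_one, hlast, ← pow_succ']
  split_ifs with ha
  · have := Nat.one_le_pow (n + 1) p hp
    simp only [ha, Fin.val_last, pow_zero]
    omega
  · rfl

lemma mul_cyclicWeight (hp : 0 < p) (C : Multiset (Fin f)) (i : Fin f) :
    p * cyclicWeight p C i = cyclicWeight p C (i + 1) + (p ^ f - 1) * C.count (-1 - i) := by
  induction C using Multiset.induction_on with
  | empty => simp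
  | cons x C ih =>
    rw [cyclicWeight_cons, mul_add, ih, mul_pow_val hp (x + i), Multiset.count_cons,
      cyclicWeight_cons, add_assoc x i 1]
    have : (x + i = -1) ↔ (-1 - i = x) := by constructor <;> intro h <;> rw [← h] <;> ring
    simp only [this]
    split_ifs <;> ring


lemma cyclicWeight_carry (hp : 0 < p) (r : Fin f) (B : Multiset (Fin f)) (i : Fin f) :
    cyclicWeight p (Multiset.replicate p r + B) i =
      cyclicWeight p ((r + 1) ::ₘ B) i + if r + i = -1 then p ^ f - 1 else 0 := by
  rw [cyclicWeight_add, cyclicWeight_replicate, mul_pow_val hp, cyclicWeight_cons,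
    add_right_comm r 1 i]
  ring

lemma cyclicWeight_le_of_count_lt (hp : 0 < p) {C : Multiset (Fin f)} (hC : ∀ r, C.count r < p)
    (i : Fin f) : cyclicWeight p C i ≤ p ^ f - 1 := by
  refine (cyclicWeight_mono (Multiset.le_iff_count.mpr fun r => ?_) i).trans
    (cyclicWeight_nsmul_univ hp i).le
  simpa [Multiset.count_nsmul] using Nat.le_sub_one_of_lt (hC r)

end CyclicWeight

section Partition

variable {p f : ℕ} [NeZero f]

/- `W r := cyclicWeight p C (-1 - r)` puts `r` in the top position, and
`p * W r = W (r - 1) + (p ^ f - 1) * C.count r`. Walking down from `s`, if no carry were possible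
`W` would stay above `(D + 1) (p ^ f - 1)` all the way round; that forces every count below `p`,
and then no weight exceeds `p ^ f - 1`. -/
lemma exists_carry_of_count_add_two_le (hp : 1 < p) {D : ℕ} (hD : 1 ≤ D) {C : Multiset (Fin f)}
    (hC : ∀ i, D * (p ^ f - 1) < cyclicWeight p C i) {s : Fin f} (hs : C.count s + 2 ≤ p) :
    ∃ r, p ≤ C.count r ∧ (D + 1) * (p ^ f - 1) < cyclicWeight p C (-1 - r) := by
  by_contra! hstuck
  set Q := p ^ f - 1
  have hrec (r : Fin f) :
      p * cyclicWeight p C (-1 - r) = cyclicWeight p C (-1 - (r - 1)) + Q * C.count r := by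
    rw [mul_cyclicWeight (by omega)]
    congr 3 <;> ring
  have hchain (j : ℕ) : (D + 1) * Q < cyclicWeight p C (-1 - (s - ((j + 1 : ℕ) : Fin f))) := by
    induction j with
    | zero =>
      have h1 := hrec s
      have h2 := hC (-1 - s)
      simp only [zero_add, Nat.cast_one]
      obtain ⟨D, rfl⟩ := Nat.exists_eq_add_of_le' hD
      obtain ⟨p, rfl⟩ := Nat.exists_eq_add_of_le' hp
      nlinarith [Nat.mul_le_mul_left (p + 2) h2, Nat.mul_le_mul_left Q hs, Nat.zero_le (p * D * Q)]
    | succ j ih =>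
      set r := s - ((j + 1 : ℕ) : Fin f)
      have hr : C.count r + 1 ≤ p := by
        by_contra hr
        exact (hstuck r (by omega)).not_gt ih
      have h1 := hrec r
      rw [show r - 1 = s - ((j + 1 + 1 : ℕ) : Fin f) by simp only [r]; push_cast; ring] at h1
      obtain ⟨p, rfl⟩ := Nat.exists_eq_add_of_le' (Nat.le_of_add_left_le hr)
      nlinarith [Nat.mul_le_mul_left (p + 1) ih, Nat.mul_le_mul_left Q hr, Nat.zero_le (p * D * Q)]
  have hcount (r : Fin f) : C.count r < p := by
    by_cases hr : r = s
    · subst hr; omega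
    have hsr : (s - r).val ≠ 0 := fun h => hr (sub_eq_zero.mp (Fin.eq_of_val_eq h)).symm
    have h := hchain ((s - r).val - 1)
    rw [Nat.sub_add_cancel (Nat.one_le_iff_ne_zero.mpr hsr), Fin.cast_val_eq_self,
      sub_sub_cancel] at h
    by_contra hr'
    exact (hstuck r (by omega)).not_gt h
  have h1 := cyclicWeight_le_of_count_lt (by omega) hcount 0
  have h2 := hC 0
  nlinarith


/-- Part `0` stands for `m_0`; the other parts are `q`-even because `n ≡ l(n) [MOD q - 1]`. -/
def IsEvenPartition (p : ℕ) {d : ℕ} (C : Multiset (Fin f))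
    (P : Fin (d + 1) → Multiset (Fin f)) : Prop :=
  ∑ t, P t = C ∧ (∀ t, P t ≠ 0) ∧ ∀ t ≠ 0, p ^ f - 1 ∣ cyclicWeight p (P t) 0

lemma IsEvenPartition.snoc (hp : 1 < p) {d : ℕ} {C : Multiset (Fin f)}
    {P : Fin (d + 1) → Multiset (Fin f)} (hP : IsEvenPartition p C P) :
    IsEvenPartition p (C + (p - 1) • univ.val)
      (Fin.snoc P ((p - 1) • univ.val) : Fin (d + 2) → Multiset (Fin f)) := by
  obtain ⟨hsum, hne, hdvd⟩ := hP
  refine ⟨by simp [Fin.sum_univ_castSucc, hsum], fun t => ?_, fun t => ?_⟩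
  · refine Fin.lastCases ?_ (fun t => by simpa using hne t) t
    simpa using ⟨univ_nonempty.ne_empty, by omega⟩
  · refine Fin.lastCases (fun _ => ?_) (fun t ht => ?_) t
    · simp [cyclicWeight_nsmul_univ (by omega : 0 < p)]
    · simpa using hdvd t (by rintro rfl; exact ht rfl)

lemma IsEvenPartition.uncarry (hp : 0 < p) {d : ℕ} {r : Fin f} {B : Multiset (Fin f)}
    {P : Fin (d + 1) → Multiset (Fin f)} (hP : IsEvenPartition p ((r + 1) ::ₘ B) P) :
    ∃ P' : Fin (d + 1) → Multiset (Fin f),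
      IsEvenPartition p (Multiset.replicate p r + B) P' := by
  obtain ⟨hsum, hne, hdvd⟩ := hP
  obtain ⟨t₀, -, ht₀⟩ := Multiset.mem_sum.mp (hsum ▸ Multiset.mem_cons_self (r + 1) B)
  obtain ⟨w, hw⟩ := Multiset.exists_cons_of_mem ht₀
  refine ⟨Function.update P t₀ (Multiset.replicate p r + w), ?_, fun t => ?_, fun t ht => ?_⟩
  · have hrest := Finset.add_sum_erase univ P (mem_univ t₀)
    rw [hsum, hw, Multiset.cons_add, Multiset.cons_inj_right] at hrest
    rw [Finset.sum_update_of_mem (mem_univ t₀), ← hrest, add_assoc, ← Finset.erase_eq]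
  · rcases eq_or_ne t t₀ with rfl | h
    · rw [Function.update_self, ← Multiset.card_pos]
      simp only [Multiset.card_add, Multiset.card_replicate]
      omega
    · simpa [h] using hne t
  · rcases eq_or_ne t t₀ with rfl | h
    · have := hdvd t ht
      rw [hw] at this
      rw [Function.update_self, cyclicWeight_carry hp]
      exact dvd_add this (by split_ifs <;> simp)
    · simpa [h] using hdvd t ht

theorem exists_isEvenPartition (hp : 1 < p) (d : ℕ) (C : Multiset (Fin f))
    (hC : ∀ i, d * (p ^ f - 1) < cyclicWeight p C i) :
    ∃ P : Fin (d + 1) → Multiset (Fin f), IsEvenPartition p C P := by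
  induction hn : Multiset.card C using Nat.strong_induction_on generalizing d C with
  | _ n ih =>
  subst hn
  rcases d with _ | D
  · refine ⟨fun _ => C, by simp, fun _ => ?_, fun t ht => absurd (Fin.fin_one_eq_zero t) ht⟩
    rintro rfl
    simpa using hC 0
  by_cases hall : ∀ x, p - 1 ≤ C.count x
  · obtain ⟨C', rfl⟩ : ∃ C', C = C' + (p - 1) • univ.val :=
      ⟨C - (p - 1) • univ.val, (tsub_add_cancel_of_le (Multiset.le_iff_count.mpr fun x => by
        simpa [Multiset.count_nsmul] using hall x)).symm⟩
    have hcard : Multiset.card C' < Multiset.card (C' + (p - 1) • univ.val) := by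
      simpa using Nat.mul_pos (by omega : 0 < p - 1) (NeZero.pos f)
    obtain ⟨P, hP⟩ := ih _ hcard D C' (fun i => by
      have := hC i
      rw [cyclicWeight_add, cyclicWeight_nsmul_univ (by omega)] at this
      linarith) rfl
    exact ⟨_, hP.snoc hp⟩
  push Not at hall
  obtain ⟨s, hs⟩ := hall
  obtain ⟨r, hr, hrC⟩ := exists_carry_of_count_add_two_le hp (by omega) hC (s := s) (by omega)
  obtain ⟨B, rfl⟩ : ∃ B, C = Multiset.replicate p r + B :=
    ⟨C - Multiset.replicate p r,
      (add_tsub_cancel_of_le (Multiset.le_count_iff_replicate_le.mp hr)).symm⟩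
  have hcard : Multiset.card ((r + 1) ::ₘ B) < Multiset.card (Multiset.replicate p r + B) := by
    simp only [Multiset.card_cons, Multiset.card_add, Multiset.card_replicate]
    omega
  obtain ⟨P, hP⟩ := ih _ hcard (D + 1) ((r + 1) ::ₘ B) (fun i => by
    have h := hC i
    rw [cyclicWeight_carry (by omega)] at h
    split_ifs at h with hi
    · obtain rfl : i = -1 - r := by rw [← hi]; ring
      rw [cyclicWeight_carry (by omega), if_pos (by ring)] at hrC
      linarith
    · simpa using h) rfl
  exact hP.uncarry (by omega)

end Partition

section Positions

variable {p : ℕ}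

/-- A no-carry decomposition of `n` in base `p` is a splitting of this multiset. -/
def digitPositions (p n : ℕ) : Multiset ℕ :=
  ∑ j ∈ range n, Multiset.replicate (digit p n j) j

def ofPositions (p : ℕ) (E : Multiset ℕ) : ℕ := (E.map (p ^ ·)).sum

lemma sum_map_eq_sum_count {E : Multiset ℕ} {J : ℕ} (hE : ∀ x ∈ E, x < J)
    (g : ℕ → ℕ) : (E.map g).sum = ∑ j ∈ range J, E.count j * g j := by
  rw [Finset.sum_multiset_map_count]
  refine sum_subset (fun x hx => mem_range.mpr (hE x (Multiset.mem_toFinset.mp hx)))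
    fun x _ hx => ?_
  simp [Multiset.count_eq_zero.mpr (by simpa using hx)]

lemma count_digitPositions (hp : 1 < p) (n j : ℕ) :
    (digitPositions p n).count j = digit p n j := by
  simp only [digitPositions, Multiset.count_sum', Multiset.count_replicate, sum_ite_eq', mem_range]
  split_ifs with hj
  · rfl
  · exact (digit_eq_zero_of_lt ((Nat.lt_pow_self hp).trans_le
      (Nat.pow_le_pow_right (by omega) (not_lt.mp hj)))).symm

lemma lt_of_mem_digitPositions {n x : ℕ} (hx : x ∈ digitPositions p n) : x < n := by
  obtain ⟨j, hj, hx⟩ := Multiset.mem_sum.mp hx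
  exact (Multiset.eq_of_mem_replicate hx) ▸ mem_range.mp hj

lemma ofPositions_digitPositions (hp : 1 < p) (n : ℕ) :
    ofPositions p (digitPositions p n) = n := by
  rw [ofPositions, sum_map_eq_sum_count (fun _ => lt_of_mem_digitPositions)]
  simp_rw [count_digitPositions hp]
  exact sum_digit_mul_pow (Nat.lt_pow_self hp)

lemma ofPositions_add (p : ℕ) (E F : Multiset ℕ) :
    ofPositions p (E + F) = ofPositions p E + ofPositions p F := by
  simp [ofPositions]

lemma ofPositions_sum {n : ℕ} (E : Fin n → Multiset ℕ) :
    ofPositions p (∑ t, E t) = ∑ t, ofPositions p (E t) :=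
  map_sum (⟨⟨ofPositions p, rfl⟩, ofPositions_add p⟩ : Multiset ℕ →+ ℕ) E univ

lemma ofPositions_pos (hp : 0 < p) {E : Multiset ℕ} (hE : E ≠ 0) : 0 < ofPositions p E := by
  obtain ⟨x, hx⟩ := Multiset.exists_mem_of_ne_zero hE
  exact (pow_pos hp x).trans_le (Multiset.le_sum_of_mem (Multiset.mem_map_of_mem _ hx))

section SubDigitPositions

variable (hp : 1 < p) {k : ℕ} {E : Multiset ℕ} (hE : E ≤ digitPositions p k)
include hp hE

lemma ofPositions_le_of_le_digitPositions : ofPositions p E ≤ k := by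
  obtain ⟨F, hF⟩ := Multiset.le_iff_exists_add.mp hE
  have := ofPositions_digitPositions hp k
  rw [hF, ofPositions_add] at this
  omega

lemma digit_ofPositions (j : ℕ) : digit p (ofPositions p E) j = E.count j := by
  have hlt (x) (hx : x ∈ E) : x < k := lt_of_mem_digitPositions (Multiset.mem_of_le hE hx)
  have hcount (x : ℕ) : E.count x < p :=
    (Multiset.count_le_of_le x hE).trans_lt
      (count_digitPositions hp k x ▸ digit_lt (by omega) k x)
  rw [ofPositions, sum_map_eq_sum_count hlt, digit_sum_mul_pow hcount]
  split_ifs with hj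
  · rfl
  · exact (Multiset.count_eq_zero.mpr fun hx => hj (hlt j hx)).symm

lemma digits_sum_ofPositions_mul_pow {f : ℕ} [NeZero f] (i : Fin f) :
    (Nat.digits (p ^ f) (ofPositions p E * p ^ i.val)).sum = cyclicWeight p (E.map (↑)) i := by
  have hlt (x) (hx : x ∈ E) : x < k := lt_of_mem_digitPositions (Multiset.mem_of_le hE hx)
  rw [digits_sum_mul_pow hp (NeZero.pos f)
    ((ofPositions_le_of_le_digitPositions hp hE).trans_lt (Nat.lt_pow_self hp)),
    cyclicWeight, Multiset.map_map]
  simp_rw [digit_ofPositions hp hE]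
  rw [sum_map_eq_sum_count hlt]
  refine sum_congr rfl fun j _ => ?_
  simp [Fin.val_add, Nat.mod_add_mod]

end SubDigitPositions

end Positions

section HardDirection

variable {p f : ℕ}

theorem exists_mem_Uset (hp : 1 < p) (hf : 0 < f) {d k : ℕ}
    (h : ∀ i < f, d * (p ^ f - 1) < (Nat.digits (p ^ f) (k * p ^ i)).sum) :
    ∃ m ∈ Uset p (p ^ f) d k, 0 < m 0 := by
  have : NeZero f := ⟨hf.ne'⟩
  set D := digitPositions p k
  have hC (i : Fin f) : d * (p ^ f - 1) < cyclicWeight p (D.map (↑)) i := by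
    rw [← digits_sum_ofPositions_mul_pow hp le_rfl, ofPositions_digitPositions hp]
    exact h i i.isLt
  obtain ⟨P, hPsum, hPne, hPdvd⟩ := exists_isEvenPartition hp d _ hC
  obtain ⟨E, hEsum, hEP⟩ := Multiset.exists_sum_map_eq _ hPsum
  have hED (t) : E t ≤ D := hEsum ▸ single_le_sum (fun _ _ => Multiset.zero_le _) (mem_univ t)
  have hEne (t) : E t ≠ 0 := fun h => hPne t (by rw [← hEP t, h, Multiset.map_zero])
  refine ⟨fun t => ofPositions p (E t), ⟨⟨?_, fun j => ?_⟩, fun t ht => ?_⟩,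
    ofPositions_pos (by omega) (hEne 0)⟩
  · rw [← ofPositions_sum, hEsum, ofPositions_digitPositions hp]
  · change ∑ t, digit p (ofPositions p (E t)) j = digit p k j
    simp_rw [digit_ofPositions hp (hED _)]
    rw [← Multiset.count_sum', hEsum, count_digitPositions hp]
  · refine ⟨ofPositions_pos (by omega) (hEne t), ?_⟩
    have hmod := modEq_digits_sum_sub_one (Nat.one_lt_pow hf.ne' hp) (ofPositions p (E t))
    rw [← mul_one (ofPositions p (E t)), ← pow_zero p,
      ← show ((0 : Fin f) : ℕ) = 0 from rfl, digits_sum_ofPositions_mul_pow hp (hED t),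
      hEP t] at hmod
    simpa using (hmod.dvd_iff dvd_rfl).mpr (hPdvd t (by rintro rfl; exact lt_irrefl _ ht))

end HardDirection

lemma Lval_le_iff {p f : ℕ} (hp : 1 < p) (hf : 0 < f) (k d : ℕ) :
    Lval p f k hf ≤ d ↔
      ∃ i < f, (Nat.digits (p ^ f) (k * p ^ i)).sum ≤ d * (p ^ f - 1) := by
  have hq : 1 ≤ p ^ f := Nat.one_le_pow _ _ (by omega)
  have hQ : (0 : ℚ) < (p : ℚ) ^ f - 1 := by
    rw [sub_pos]; exact_mod_cast Nat.one_lt_pow hf.ne' hp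
  refine (inf'_le_iff _).trans (exists_congr fun i => and_congr mem_range ?_)
  rw [div_le_iff₀ hQ, ← Nat.cast_le (α := ℚ)]
  push_cast [Nat.cast_sub hq]
  rfl

end Sheats

theorem Vset_empty_iff_general
    (p f : ℕ) (hp : p.Prime) (hf : 0 < f) (k d : ℕ) :
    {m : Fin (d + 1) → ℕ | m ∈ Uset p (p ^ f) d k ∧ 0 < m 0} = ∅ ↔
      Lval p f k hf ≤ (d : ℚ) := by
  rw [Sheats.Lval_le_iff hp.one_lt hf, Set.eq_empty_iff_forall_notMem]
  constructor
  · intro hV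
    by_contra! h
    obtain ⟨m, hm, hm0⟩ := Sheats.exists_mem_Uset hp.one_lt hf h
    exact hV m ⟨hm, hm0⟩
  · rintro ⟨i, -, hi⟩ m ⟨hm, hm0⟩
    exact (Sheats.lt_digits_sum_of_mem_Uset hp.one_lt hf hm hm0 i).not_ge hi

/-- Sheats: `V_d(k) = {m ∈ U_d(k) : m_0 > 0}` is empty iff `d ≥ L_k`. -/
theorem Vset_empty_iff
    (p f : ℕ) (hp : p.Prime) (hf : 0 < f) (k d : ℕ) (hk : 0 < k) :
    {m : Fin (d + 1) → ℕ | m ∈ Uset p (p ^ f) d k ∧ 0 < m 0} = ∅ ↔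
      Lval p f k hf ≤ (d : ℚ) :=
  Vset_empty_iff_general p f hp hf k d
end

section
/- For every integer s < 0, the depth-one zeta value ζ(s) := Σ_{d ≥ 0} S_d(s) (a finite sum, since S_d(s) = 0 for all sufficiently large d) vanishes if and only if s is divisible by q − 1. -/
open Polynomial

section ZetaAux

variable {Fq : Type} [Field Fq] [Fintype Fq]

private lemma card_cast_poly_eq_zero :
    ((Fintype.card Fq : ℕ) : Polynomial Fq) = 0 := by
  have h : ((Fintype.card Fq : ℕ) : Fq) = 0 := Nat.cast_card_eq_zero Fq
  rw [← map_natCast (C : Fq →+* Polynomial Fq), h, map_zero]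

private lemma key_sum_pow_eq_zero (m k : ℕ) (hkm : k < m)
    (ψ : Polynomial Fq) (μ : Fin m → Polynomial Fq) :
    ∑ c : Fin m → Fq, (ψ + ∑ i : Fin m, C (c i) * μ i) ^ k = 0 := by
  classical
  have expand : ∀ c : Fin m → Fq,
      (ψ + ∑ i : Fin m, C (c i) * μ i) ^ k
        = ∑ g : Fin k → Option (Fin m), ∏ j : Fin k,
            ((g j).elim ψ fun i => C (c i) * μ i) := by
    intro c
    rw [show ψ + ∑ i : Fin m, C (c i) * μ i
          = ∑ x : Option (Fin m), x.elim ψ (fun i => C (c i) * μ i) by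
        rw [Fintype.sum_option]
        rfl, Fintype.sum_pow]
  simp_rw [expand]
  rw [Finset.sum_comm]
  refine Finset.sum_eq_zero fun g _ => ?_
  have hex : ∃ i : Fin m, ∀ j : Fin k, g j ≠ some i := by
    by_contra h
    push_neg at h
    choose v hv using h
    have hinj : Function.Injective v := by
      intro i i' he
      have hs : (some i : Option (Fin m)) = some i' := by
        rw [← hv i, ← hv i', he]
      exact Option.some_injective _ hs
    have hle := Fintype.card_le_of_injective v hinj
    simp only [Fintype.card_fin] at hle
    omega
  obtain ⟨i, hi⟩ := hex
  obtain ⟨m', rfl⟩ : ∃ m', m = m' + 1 := ⟨m - 1, by omega⟩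
  set H : (Fin (m' + 1) → Fq) → Polynomial Fq :=
    fun c => ∏ j : Fin k, ((g j).elim ψ fun i' => C (c i') * μ i') with hH
  have hfix : ∀ (a : Fq) (r : Fin m' → Fq),
      H (i.insertNth a r) = H (i.insertNth 0 r) := by
    intro a r
    refine Finset.prod_congr rfl fun j _ => ?_
    rcases hgj : g j with _ | i'
    · rfl
    · have hne : i' ≠ i := fun h => hi j (by rw [hgj, h])
      obtain ⟨j', rfl⟩ := Fin.exists_succAbove_eq hne
      simp only [Option.elim_some, Fin.insertNth_apply_succAbove]
  have hsum : ∑ c : Fin (m' + 1) → Fq, H c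
      = ∑ p : Fq × (Fin m' → Fq), H (i.insertNth p.1 p.2) :=
    (Fintype.sum_equiv (Fin.insertNthEquiv (fun _ => Fq) i)
      (fun p => H (i.insertNth p.1 p.2)) H (fun p => rfl)).symm
  calc (∑ c : Fin (m' + 1) → Fq, H c)
      = ∑ p : Fq × (Fin m' → Fq), H (i.insertNth p.1 p.2) := hsum
    _ = ∑ p : Fq × (Fin m' → Fq), H (i.insertNth 0 p.2) :=
        Finset.sum_congr rfl fun p _ => hfix p.1 p.2
    _ = 0 := by
        rw [Fintype.sum_prod_type]
        have hcst : ∀ x : Fq, (∑ y : Fin m' → Fq, H (i.insertNth 0 (x, y).2))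
            = ∑ y : Fin m' → Fq, H (i.insertNth 0 y) := fun _ => rfl
        rw [Finset.sum_congr rfl fun x _ => hcst x, Finset.sum_const, Finset.card_univ,
          nsmul_eq_mul, card_cast_poly_eq_zero, zero_mul]

private lemma powerSum_eq_zero {d k : ℕ} (hkd : k < d) : powerSum Fq d k = 0 := by
  unfold powerSum
  exact key_sum_pow_eq_zero d k hkd (X ^ d) (fun i => X ^ (i : ℕ))

/-- The sum of `a^k` over the whole space of polynomials of degree `< m`. -/
private noncomputable def Vsum (Fq : Type) [Field Fq] [Fintype Fq] (m k : ℕ) : Polynomial Fq :=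
  ∑ b : Fin m → Fq, (∑ i : Fin m, C (b i) * X ^ (i : ℕ)) ^ k

private lemma Vsum_eq_zero {m k : ℕ} (hkm : k < m) : Vsum Fq m k = 0 := by
  have h := key_sum_pow_eq_zero m k hkm (0 : Polynomial Fq) (fun i => X ^ (i : ℕ))
  unfold Vsum
  simpa using h

private lemma Vsum_succ {k : ℕ} (hdvd : (Fintype.card Fq - 1) ∣ k) (m : ℕ) :
    Vsum Fq (m + 1) k = Vsum Fq m k - powerSum Fq m k := by
  classical
  have hins : ∀ (a : Fq) (r : Fin m → Fq),
      (∑ i : Fin (m + 1), C ((Fin.last m).insertNth a r i) * X ^ (i : ℕ)) ^ k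
        = ((∑ j : Fin m, C (r j) * X ^ (j : ℕ)) + C a * X ^ m) ^ k := by
    intro a r
    congr 1
    rw [Fin.sum_univ_castSucc]
    congr 1
    · refine Finset.sum_congr rfl fun j _ => ?_
      rw [← Fin.succAbove_last_apply j, Fin.insertNth_apply_succAbove,
        Fin.succAbove_last_apply, Fin.coe_castSucc]
    · rw [Fin.insertNth_apply_same, Fin.val_last]
  have h1 : Vsum Fq (m + 1) k
      = ∑ p : Fq × (Fin m → Fq),
          ((∑ j : Fin m, C (p.2 j) * X ^ (j : ℕ)) + C p.1 * X ^ m) ^ k := by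
    unfold Vsum
    refine (Fintype.sum_equiv (Fin.insertNthEquiv (fun _ => Fq) (Fin.last m))
      (fun p => ((∑ j : Fin m, C (p.2 j) * X ^ (j : ℕ)) + C p.1 * X ^ m) ^ k)
      (fun b => (∑ i : Fin (m + 1), C (b i) * X ^ (i : ℕ)) ^ k)
      (fun p => (hins p.1 p.2).symm)).symm
  rw [h1, Fintype.sum_prod_type]
  rw [← Finset.add_sum_erase Finset.univ _ (Finset.mem_univ (0 : Fq))]
  have hzero : (∑ r : Fin m → Fq,
      ((∑ j : Fin m, C (r j) * X ^ (j : ℕ)) + C (0 : Fq) * X ^ m) ^ k) = Vsum Fq m k := by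
    unfold Vsum
    refine Finset.sum_congr rfl fun r _ => ?_
    rw [map_zero, zero_mul, add_zero]
  have hne : ∀ a ∈ Finset.univ.erase (0 : Fq),
      (∑ r : Fin m → Fq, ((∑ j : Fin m, C (r j) * X ^ (j : ℕ)) + C a * X ^ m) ^ k)
        = C a ^ k * powerSum Fq m k := by
    intro a ha
    have ha0 : a ≠ 0 := Finset.ne_of_mem_erase ha
    have hcv : (∑ r : Fin m → Fq, ((∑ j : Fin m, C (r j) * X ^ (j : ℕ)) + C a * X ^ m) ^ k)
        = ∑ r : Fin m → Fq, ((∑ j : Fin m, C (a * r j) * X ^ (j : ℕ)) + C a * X ^ m) ^ k := by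
      refine (Fintype.sum_equiv (Equiv.piCongrRight fun _ : Fin m => Equiv.mulLeft₀ a ha0)
        (fun r => ((∑ j : Fin m, C (a * r j) * X ^ (j : ℕ)) + C a * X ^ m) ^ k)
        (fun r => ((∑ j : Fin m, C (r j) * X ^ (j : ℕ)) + C a * X ^ m) ^ k)
        (fun r => by simp [Equiv.mulLeft₀_apply])).symm
    rw [hcv, powerSum, Finset.mul_sum]
    refine Finset.sum_congr rfl fun r _ => ?_
    have hfac : (∑ j : Fin m, C (a * r j) * X ^ (j : ℕ)) + C a * X ^ m
        = C a * ((X : Polynomial Fq) ^ m + ∑ j : Fin m, C (r j) * X ^ (j : ℕ)) := by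
      rw [mul_add, Finset.mul_sum, add_comm]
      congr 1
      refine Finset.sum_congr rfl fun j _ => ?_
      rw [map_mul, mul_assoc]
    rw [hfac, mul_pow]
  rw [hzero, Finset.sum_congr rfl hne, ← Finset.sum_mul]
  have hone : ∀ a ∈ Finset.univ.erase (0 : Fq), C a ^ k = (1 : Polynomial Fq) := by
    intro a ha
    have ha0 : a ≠ 0 := Finset.ne_of_mem_erase ha
    obtain ⟨c, rfl⟩ := hdvd
    rw [← map_pow, pow_mul, FiniteField.pow_card_sub_one_eq_one a ha0, one_pow, map_one]
  rw [Finset.sum_congr rfl hone, Finset.sum_const,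
    Finset.card_erase_of_mem (Finset.mem_univ _), Finset.card_univ, nsmul_eq_mul, mul_one]
  have hneg : ((Fintype.card Fq - 1 : ℕ) : Polynomial Fq) = -1 := by
    rw [Nat.cast_sub Fintype.card_pos, card_cast_poly_eq_zero, Nat.cast_one, zero_sub]
  rw [hneg]
  ring

private lemma Vsum_eq_neg_sum {k : ℕ} (hdvd : (Fintype.card Fq - 1) ∣ k) (hk : 0 < k) :
    ∀ m, Vsum Fq m k = -∑ d ∈ Finset.range m, powerSum Fq d k
  | 0 => by simp [Vsum, zero_pow hk.ne']
  | (m + 1) => by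
      rw [Vsum_succ hdvd m, Vsum_eq_neg_sum hdvd hk m, Finset.sum_range_succ]
      ring

end ZetaAux

/-- Goss: for `s = -k < 0`, the depth-one zeta value `ζ(s) = ∑_{d ≥ 0} S_d(s)`
vanishes iff `s` is divisible by `q - 1`, i.e. `(q - 1) ∣ k`. -/
theorem zeta_neg_eq_zero_iff
    (p f : ℕ) (hp : p.Prime) (hf : 0 < f)
    (Fq : Type) [Field Fq] [Fintype Fq] (hcard : Fintype.card Fq = p ^ f)
    (k : ℕ) (hk : 0 < k) :
    (∑ᶠ d : ℕ, powerSum Fq d k) = 0 ↔ (p ^ f - 1) ∣ k := by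
  classical
  have hsupp : (Function.support fun d => powerSum Fq d k) ⊆ ↑(Finset.range (k + 1)) := by
    intro d hd
    simp only [Finset.coe_range, Set.mem_Iio]
    by_contra hlt
    exact hd (powerSum_eq_zero (by omega))
  rw [finsum_eq_sum_of_support_subset _ hsupp, ← hcard]
  constructor
  · intro h0
    by_contra hndvd
    have hgu : (∑ x : Fqˣ, (x : Fq) ^ k) = 0 := by
      rw [FiniteField.sum_pow_units Fq k, if_neg hndvd]
    have hg0 : (∑ a : Fq, a ^ k) = 0 := by
      rw [← Finset.add_sum_erase Finset.univ (fun a : Fq => a ^ k) (Finset.mem_univ 0),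
        zero_pow hk.ne', zero_add]
      have hsub : (∑ a ∈ Finset.univ.erase (0 : Fq), a ^ k)
          = ∑ x : {a : Fq // a ≠ 0}, (x : Fq) ^ k := by
        refine Finset.sum_subtype _ (fun a => ?_) (fun a => a ^ k)
        simp
      have hsub2 : (∑ x : {a : Fq // a ≠ 0}, (x : Fq) ^ k) = ∑ x : Fqˣ, (x : Fq) ^ k :=
        (Fintype.sum_equiv unitsEquivNeZero (fun x : Fqˣ => (x : Fq) ^ k)
          (fun x : {a : Fq // a ≠ 0} => (x : Fq) ^ k) (fun x => by simp)).symm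
      rw [hsub, hsub2]
      exact hgu
    have hd1 : ∀ e : ℕ, Polynomial.eval 0 (powerSum Fq (e + 1) k) = 0 := by
      intro e
      rw [powerSum, Polynomial.eval_finset_sum]
      have hc : ∀ c : Fin (e + 1) → Fq,
          Polynomial.eval 0 ((X ^ (e + 1) + ∑ i : Fin (e + 1), C (c i) * X ^ (i : ℕ)) ^ k)
            = (c 0) ^ k := by
        intro c
        rw [Polynomial.eval_pow]
        congr 1
        rw [Polynomial.eval_add, Polynomial.eval_pow, Polynomial.eval_X,
          zero_pow (by omega : e + 1 ≠ 0), Polynomial.eval_finset_sum, zero_add]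
        have hterm : ∀ i : Fin (e + 1),
            Polynomial.eval 0 (C (c i) * X ^ (i : ℕ)) = if i = 0 then c i else 0 := by
          intro i
          rw [Polynomial.eval_mul, Polynomial.eval_C, Polynomial.eval_pow, Polynomial.eval_X]
          rcases eq_or_ne i 0 with rfl | hne
          · simp
          · rw [if_neg hne, zero_pow, mul_zero]
            exact fun h => hne (Fin.ext h)
        rw [Finset.sum_congr rfl fun i _ => hterm i,
          Finset.sum_ite_eq' Finset.univ (0 : Fin (e + 1)) c, if_pos (Finset.mem_univ _)]
      rw [Finset.sum_congr rfl fun c _ => hc c]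
      have hsum : (∑ c : Fin (e + 1) → Fq, (c 0) ^ k)
          = ∑ p : Fq × (Fin e → Fq), p.1 ^ k := by
        refine (Fintype.sum_equiv (Fin.insertNthEquiv (fun _ => Fq) (0 : Fin (e + 1)))
          (fun p => p.1 ^ k) (fun c => (c 0) ^ k) (fun p => ?_)).symm
        simp
      rw [hsum, Fintype.sum_prod_type, Finset.sum_comm]
      simp [hg0]
    have h00 : Polynomial.eval 0 (powerSum Fq 0 k) = (1 : Fq) := by
      simp [powerSum]
    have heval : (∑ d ∈ Finset.range (k + 1), Polynomial.eval 0 (powerSum Fq d k)) = 0 := by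
      rw [← Polynomial.eval_finset_sum, h0, Polynomial.eval_zero]
    rw [Finset.sum_range_succ'] at heval
    have hz : (∑ e ∈ Finset.range k, Polynomial.eval 0 (powerSum Fq (e + 1) k)) = 0 :=
      Finset.sum_eq_zero fun e _ => hd1 e
    rw [hz, zero_add, h00] at heval
    exact one_ne_zero heval
  · intro hdvd
    have h := Vsum_eq_neg_sum (Fq := Fq) hdvd hk (k + 1)
    rw [Vsum_eq_zero (Nat.lt_succ_self k)] at h
    exact neg_eq_zero.mp h.symm
end

section
/- Let N > 0, d > 0 and let B be a valid matrix of W_d(N). Then W_d^B(N) contains a unique τ-monotonic composition, and this composition is lexicographically the largest element of W_d^B(N) and has weight strictly smaller than the weight of every other element of W_d^B(N). In particular, every modest composition and every optimal composition in W_d(N) is τ-monotonic. -/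
open Polynomial

/-!
If a composition `Y ∈ W_d^B(N)` is not τ-monotonic, there are parts `i < j` and positions
`m < n` with `m ≡ n (mod f)` such that `Y_i` has a nonzero digit at `m` and `Y_j` one at `n`.
Moving a unit of `Y_i` from `m` up to `n` and a unit of `Y_j` from `n` down to `m` stays in
`W_d^B(N)`: the absence of carries leaves room for the moved digits, `Γ` is unchanged since
`m ≡ n (mod f)`, and `p ^ m ≡ p ^ n (mod q - 1)` preserves `q`-evenness. The move makes the
composition lexicographically larger and its weight smaller by `(j - i)(p ^ n - p ^ m)`. Hence a
minimum-weight element of `W_d^B(N)` is τ-monotonic, and every other element climbs to it by such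
moves. It is the only τ-monotonic one: within each residue class mod `f`, τ-monotonicity makes the
parts take the digit units of `N` greedily from the top, in the amounts prescribed by `B`.
-/

lemma Finset.sum_eq_sum_of_add_ite_eq {s : Finset ℕ} {a b : ℕ → ℕ} {m n : ℕ}
    (h : ∀ t, a t + (if t = m then 1 else 0) = b t + (if t = n then 1 else 0))
    (hs : m ∈ s ↔ n ∈ s) : ∑ t ∈ s, a t = ∑ t ∈ s, b t := by
  have hsum := Finset.sum_congr rfl fun t (_ : t ∈ s) => h t
  simp only [Finset.sum_add_distrib, Finset.sum_ite_eq', hs] at hsum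
  omega

lemma Fintype.sum_add_eq_sum_add_of_eq_of_ne {ι M : Type*} [Fintype ι] [DecidableEq ι]
    [AddCommMonoid M] {g g' : ι → M} {i j : ι} (hij : i ≠ j)
    (h : ∀ k, k ≠ i → k ≠ j → g' k = g k) :
    ∑ k, g' k + (g i + g j) = ∑ k, g k + (g' i + g' j) := by
  have hrest : ∑ k ∈ {i, j}ᶜ, g' k = ∑ k ∈ {i, j}ᶜ, g k :=
    Finset.sum_congr rfl fun k hk => by
      simp only [Finset.mem_compl, Finset.mem_insert, Finset.mem_singleton, not_or] at hk
      exact h k hk.1 hk.2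
  rw [← Finset.sum_add_sum_compl {i, j} g', ← Finset.sum_add_sum_compl {i, j} g,
    Finset.sum_pair hij, Finset.sum_pair hij, hrest]
  abel

section Digits

variable {p : ℕ}

lemma pow_le_of_div_pow_mod_ne_zero {x t : ℕ} (h : x / p ^ t % p ≠ 0) : p ^ t ≤ x := by
  by_contra hlt
  exact h (by rw [Nat.div_eq_of_lt (not_le.mp hlt), Nat.zero_mod])

lemma div_pow_mod_add_pow (hp : 0 < p) {x n : ℕ} (h : x / p ^ n % p + 1 < p) (t : ℕ) :
    (x + p ^ n) / p ^ t % p = x / p ^ t % p + if t = n then 1 else 0 := by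
  have hsucc : (x / p ^ n + 1) % p = x / p ^ n % p + 1 := by
    rw [Nat.add_mod, Nat.mod_eq_of_lt (a := 1) (by omega), Nat.mod_eq_of_lt h]
  rcases lt_trichotomy t n with htn | rfl | hnt
  · have hpow : p ^ n = p ^ t * (p * p ^ (n - t - 1)) := by
      rw [← pow_succ', ← pow_add]
      congr 1
      omega
    rw [hpow, Nat.add_mul_div_left _ _ (pow_pos hp t), Nat.add_mul_mod_self_left,
      if_neg htn.ne, add_zero]
  · rw [Nat.add_div_right _ (pow_pos hp t), hsucc, if_pos rfl]
  · have hcarry : ¬ p ∣ x / p ^ n + 1 := by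
      rw [Nat.dvd_iff_mod_eq_zero, hsucc]
      omega
    have hhigh : (x + p ^ n) / p ^ n / p = x / p ^ n / p := by
      rw [Nat.add_div_right _ (pow_pos hp n), Nat.succ_div_of_not_dvd hcarry]
    have hpow : p ^ t = p ^ n * p * p ^ (t - n - 1) := by
      rw [← pow_succ, ← pow_add]
      congr 1
      omega
    simp only [hpow, ← Nat.div_div_eq_div_mul, hhigh, if_neg hnt.ne', add_zero]

lemma div_pow_mod_sub_pow (hp : 0 < p) {x m : ℕ} (h : x / p ^ m % p ≠ 0) (t : ℕ) :
    (x - p ^ m) / p ^ t % p + (if t = m then 1 else 0) = x / p ^ t % p := by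
  have hle := pow_le_of_div_pow_mod_ne_zero h
  have hroom : (x - p ^ m) / p ^ m % p + 1 < p := by
    have hdiv : (x - p ^ m) / p ^ m = x / p ^ m - 1 := by
      simpa using Nat.sub_mul_div x (p ^ m) 1
    have hlt : x / p ^ m % p < p := Nat.mod_lt _ hp
    have hsplit : x / p ^ m - 1 = (x / p ^ m % p - 1) + p * (x / p ^ m / p) := by
      have := Nat.div_add_mod (x / p ^ m) p
      omega
    rw [hdiv, hsplit, Nat.add_mul_mod_self_left, Nat.mod_eq_of_lt (by omega)]
    omega
  rw [← div_pow_mod_add_pow hp hroom t, Nat.sub_add_cancel hle]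

lemma div_pow_mod_sub_pow_add_pow (hp : 0 < p) {x m n : ℕ} (hmn : m ≠ n)
    (hm : x / p ^ m % p ≠ 0) (hn : x / p ^ n % p + 1 < p) (t : ℕ) :
    (x - p ^ m + p ^ n) / p ^ t % p + (if t = m then 1 else 0) =
      x / p ^ t % p + if t = n then 1 else 0 := by
  have hsub := div_pow_mod_sub_pow hp hm
  have hn' : (x - p ^ m) / p ^ n % p + 1 < p := by
    have := hsub n
    rw [if_neg hmn.symm] at this
    omega
  have hadd := div_pow_mod_add_pow hp hn' t
  have := hsub t
  omega

lemma eq_of_div_pow_mod_eq {x y M : ℕ} (hx : x < p ^ M) (hy : y < p ^ M)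
    (h : ∀ t < M, x / p ^ t % p = y / p ^ t % p) : x = y := by
  have hmod : ∀ k ≤ M, x % p ^ k = y % p ^ k := by
    intro k hk
    induction k with
    | zero => simp only [pow_zero, Nat.mod_one]
    | succ k ih => rw [Nat.mod_pow_succ, Nat.mod_pow_succ, ih (by omega), h k (by omega)]
  rw [← Nat.mod_eq_of_lt hx, ← Nat.mod_eq_of_lt hy, hmod M le_rfl]

lemma pow_modEq_pow_of_mod_eq (hp : 0 < p) {f m n : ℕ} (h : m % f = n % f) :
    p ^ m ≡ p ^ n [MOD p ^ f - 1] := by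
  have hpf : p ^ f ≡ 1 [MOD p ^ f - 1] := Nat.modEq_sub (Nat.one_le_pow _ _ hp)
  have hred : ∀ k, p ^ k ≡ p ^ (k % f) [MOD p ^ f - 1] := fun k => by
    conv_lhs => rw [← Nat.div_add_mod k f, pow_add, pow_mul]
    simpa using (hpf.pow (k / f)).mul_right (p ^ (k % f))
  exact (hred m).trans (h ▸ (hred n).symm)

lemma dvd_sub_pow_add_pow (hp : 0 < p) {f x m n : ℕ} (hle : p ^ m ≤ x) (h : m % f = n % f)
    (hx : p ^ f - 1 ∣ x) : p ^ f - 1 ∣ x - p ^ m + p ^ n := by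
  have hmod : x - p ^ m + p ^ n ≡ x [MOD p ^ f - 1] := by
    simpa [Nat.sub_add_cancel hle] using
      (pow_modEq_pow_of_mod_eq hp h.symm).add_left (x - p ^ m)
  exact Nat.modEq_zero_iff_dvd.mp (hmod.trans (Nat.modEq_zero_iff_dvd.mpr hx))

lemma gamma_eq_sum_filter (hp : 1 < p) {f x M : ℕ} (hx : x < p ^ M) (r : ℕ) (hr : r < f) :
    Gamma p f x ⟨r, hr⟩ = ∑ t ∈ Finset.range M with t % f = r, x / p ^ t % p := by
  rcases eq_or_ne x 0 with rfl | hx0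
  · simp [Gamma]
  rw [Finset.sum_filter]
  refine Finset.sum_subset (Finset.range_subset_range.mpr (Nat.log_lt_of_lt_pow hx0 hx))
    fun t _ ht => ?_
  have hxt : x < p ^ t := (Nat.lt_pow_succ_log_self hp x).trans_le
    (Nat.pow_le_pow_right (by omega) (by simpa using ht))
  simp [Nat.div_eq_of_lt hxt]

lemma gamma_sub_pow_add_pow {f x m n M : ℕ} (hp : 1 < p) (hmn : m ≠ n)
    (hclass : m % f = n % f) (hm : x / p ^ m % p ≠ 0) (hn : x / p ^ n % p + 1 < p)
    (hxM : x < p ^ M) (hx'M : x - p ^ m + p ^ n < p ^ M) :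
    Gamma p f (x - p ^ m + p ^ n) = Gamma p f x := by
  funext ⟨r, hr⟩
  have hdigit := div_pow_mod_sub_pow_add_pow (by omega) hmn hm hn
  have hmM : m < M :=
    (Nat.pow_lt_pow_iff_right hp).mp ((pow_le_of_div_pow_mod_ne_zero hm).trans_lt hxM)
  have hnM : n < M := by
    have hn' : (x - p ^ m + p ^ n) / p ^ n % p ≠ 0 := by
      have := hdigit n
      rw [if_neg hmn.symm, if_pos rfl] at this
      omega
    exact (Nat.pow_lt_pow_iff_right hp).mp ((pow_le_of_div_pow_mod_ne_zero hn').trans_lt hx'M)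
  rw [gamma_eq_sum_filter hp hx'M, gamma_eq_sum_filter hp hxM]
  refine Finset.sum_eq_sum_of_add_ite_eq hdigit ?_
  simp [hmM, hnM, hclass]

end Digits

section ClassTail

variable {α : Type*} [DecidableEq α] (κ : ℕ → α) (M : ℕ)

def classTail (a : ℕ → ℕ) (j : ℕ) (r : α) : ℕ :=
  ∑ t ∈ Finset.range M with j ≤ t ∧ κ t = r, a t

/-- `TauMonotonic p f X` is this property of the digit array `fun i t => X i / p ^ t % p` with
`κ = (· % f)`. -/
def ClassAntitone {ι : Type*} [LT ι] (c : ι → ℕ → ℕ) : Prop :=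
  ∀ i j, i < j → ∀ m n, c i m ≠ 0 → c j n ≠ 0 → κ m = κ n → n ≤ m

variable {κ M}

lemma classTail_zero (a : ℕ → ℕ) (r : α) :
    classTail κ M a 0 r = ∑ t ∈ Finset.range M with κ t = r, a t := by
  simp [classTail]

lemma classTail_le_classTail_zero (a : ℕ → ℕ) (j : ℕ) (r : α) :
    classTail κ M a j r ≤ classTail κ M a 0 r :=
  Finset.sum_le_sum_of_subset (Finset.monotone_filter_right _ fun _ _ h => ⟨Nat.zero_le _, h.2⟩)

lemma exists_lt_of_classTail_lt {a : ℕ → ℕ} {j : ℕ} {r : α}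
    (h : classTail κ M a j r < classTail κ M a 0 r) : ∃ t < j, κ t = r ∧ a t ≠ 0 := by
  rw [classTail_zero] at h
  simp only [classTail, Finset.sum_filter] at h
  obtain ⟨t, -, ht⟩ := Finset.exists_lt_of_sum_lt h
  by_cases hjt : j ≤ t
  · simp [hjt] at ht
  by_cases hκ : κ t = r
  · rw [if_neg fun h => hjt h.1, if_pos hκ] at ht
    exact ⟨t, by omega, hκ, by omega⟩
  · simp [hκ] at ht

lemma classTail_eq_add {a : ℕ → ℕ} {t : ℕ} (ht : t < M) :
    classTail κ M a t (κ t) = a t + classTail κ M a (t + 1) (κ t) := by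
  have hset : {s ∈ Finset.range M | t ≤ s ∧ κ s = κ t} =
      insert t {s ∈ Finset.range M | t + 1 ≤ s ∧ κ s = κ t} := by
    ext s
    simp only [Finset.mem_filter, Finset.mem_range, Finset.mem_insert]
    constructor
    · rintro ⟨hs, hts, hκ⟩
      rcases eq_or_lt_of_le hts with rfl | hlt
      · exact Or.inl rfl
      · exact Or.inr ⟨hs, hlt, hκ⟩
    · rintro (rfl | ⟨hs, hts, hκ⟩)
      · exact ⟨ht, le_rfl, rfl⟩
      · exact ⟨hs, by omega, hκ⟩
  rw [classTail, hset, Finset.sum_insert (by simp), ← classTail]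

variable {ι : Type*} [Fintype ι] [LinearOrder ι] {c : ι → ℕ → ℕ}

/-- In a class-antitone array the rows of a lower set `S` take, in each class, the highest units
available: their mass above `j` is either all they have or everything there is above `j`. -/
lemma sum_classTail_of_isLowerSet (hc : ClassAntitone κ c) {S : Finset ι}
    (hS : IsLowerSet (S : Set ι)) (j : ℕ) (r : α) :
    ∑ i ∈ S, classTail κ M (c i) j r =
      min (∑ i ∈ S, classTail κ M (c i) 0 r) (∑ i, classTail κ M (c i) j r) := by
  refine le_antisymm (le_min (Finset.sum_le_sum fun i _ => classTail_le_classTail_zero _ j r)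
    (Finset.sum_le_sum_of_subset (Finset.subset_univ S))) ?_
  by_cases hfull : ∀ i ∈ S, classTail κ M (c i) j r = classTail κ M (c i) 0 r
  · rw [Finset.sum_congr rfl hfull]
    exact min_le_left _ _
  push Not at hfull
  obtain ⟨i₀, hi₀, hne⟩ := hfull
  obtain ⟨t, htj, hκt, hct⟩ :=
    exists_lt_of_classTail_lt (lt_of_le_of_ne (classTail_le_classTail_zero _ j r) hne)
  have hout : ∀ i ∉ S, classTail κ M (c i) j r = 0 := by
    intro i hi
    refine Finset.sum_eq_zero fun t' ht' => ?_
    simp only [Finset.mem_filter] at ht'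
    by_contra hct'
    have hlt : i₀ < i := lt_of_not_ge fun hle => hi (hS hle hi₀)
    have := hc i₀ i hlt t t' hct hct' (hκt.trans ht'.2.2.symm)
    omega
  rw [Finset.sum_subset (Finset.subset_univ S) fun i _ hi => hout i hi]
  exact min_le_right _ _

lemma eq_of_classAntitone [LocallyFiniteOrderBot ι] {c' : ι → ℕ → ℕ}
    (hc : ClassAntitone κ c) (hc' : ClassAntitone κ c')
    (hrow : ∀ i t, classTail κ M (c i) 0 (κ t) = classTail κ M (c' i) 0 (κ t))
    (hcol : ∀ t, ∑ i, c i t = ∑ i, c' i t) : ∀ i, ∀ t < M, c i t = c' i t := by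
  have hcolTail : ∀ j r, ∑ i, classTail κ M (c i) j r = ∑ i, classTail κ M (c' i) j r := by
    intro j r
    exact Finset.sum_comm.trans ((Finset.sum_congr rfl fun t _ => hcol t).trans Finset.sum_comm)
  have hlower : ∀ S : Finset ι, IsLowerSet (S : Set ι) → ∀ j t,
      ∑ i ∈ S, classTail κ M (c i) j (κ t) = ∑ i ∈ S, classTail κ M (c' i) j (κ t) := by
    intro S hS j t
    rw [sum_classTail_of_isLowerSet hc hS, sum_classTail_of_isLowerSet hc' hS, hcolTail,
      Finset.sum_congr rfl fun i _ => hrow i t]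
  have htail : ∀ i j t, classTail κ M (c i) j (κ t) = classTail κ M (c' i) j (κ t) := by
    intro i j t
    have hIic := hlower (Finset.Iic i) (by simpa using isLowerSet_Iic i) j t
    have hIio := hlower (Finset.Iio i) (by simpa using isLowerSet_Iio i) j t
    rw [← Finset.Iio_insert, Finset.sum_insert Finset.notMem_Iio_self,
      Finset.sum_insert Finset.notMem_Iio_self] at hIic
    omega
  intro i t ht
  have h := classTail_eq_add (κ := κ) (a := c i) ht
  have h' := classTail_eq_add (κ := κ) (a := c' i) ht
  have := htail i t t
  have := htail i (t + 1) t
  omega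

end ClassTail

section Compositions

variable {p f d N q : ℕ} {B : Fin d → Fin f → ℕ}

lemma le_of_mem_Wset {Y : Fin d → ℕ} (hY : Y ∈ Wset p q d N) (i : Fin d) : Y i ≤ N :=
  hY.1.1 ▸ Finset.single_le_sum (fun _ _ => Nat.zero_le _) (Finset.mem_univ i)

lemma eq_of_tauMonotonic (hp : 1 < p) (hf : 0 < f) {Y Z : Fin d → ℕ}
    (hY : Y ∈ WBset p f d N B) (hZ : Z ∈ WBset p f d N B)
    (hτY : TauMonotonic p f Y) (hτZ : TauMonotonic p f Z) : Y = Z := by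
  have hlt : ∀ {X : Fin d → ℕ}, X ∈ WBset p f d N B → ∀ i, X i < p ^ N := fun hX i =>
    (le_of_mem_Wset hX.1 i).trans_lt (Nat.lt_pow_self hp)
  have hrow : ∀ {X : Fin d → ℕ}, X ∈ WBset p f d N B → ∀ i t,
      classTail (· % f) N (fun t => X i / p ^ t % p) 0 (t % f) =
        B i ⟨t % f, Nat.mod_lt t hf⟩ := by
    intro X hX i t
    rw [classTail_zero, ← gamma_eq_sum_filter hp (hlt hX i), hX.2 i]
  have hdigits := eq_of_classAntitone (M := N) (c := fun i t => Y i / p ^ t % p)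
    (c' := fun i t => Z i / p ^ t % p) hτY hτZ
    (fun i t => (hrow hY i t).trans (hrow hZ i t).symm)
    (fun t => (hY.1.1.2 t).trans (hZ.1.1.2 t).symm)
  funext i
  exact eq_of_div_pow_mod_eq (hlt hY i) (hlt hZ i) (hdigits i)

def swapDigits (p : ℕ) (Y : Fin d → ℕ) (i j : Fin d) (m n : ℕ) : Fin d → ℕ :=
  Function.update (Function.update Y i (Y i - p ^ m + p ^ n)) j (Y j - p ^ n + p ^ m)

variable {Y : Fin d → ℕ} {i j : Fin d} {m n : ℕ}

lemma swapDigits_apply_left (hij : i ≠ j) :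
    swapDigits p Y i j m n i = Y i - p ^ m + p ^ n := by
  simp [swapDigits, hij]

lemma swapDigits_apply_right : swapDigits p Y i j m n j = Y j - p ^ n + p ^ m := by
  simp [swapDigits]

lemma swapDigits_apply_of_ne {k : Fin d} (hki : k ≠ i) (hkj : k ≠ j) :
    swapDigits p Y i j m n k = Y k := by
  simp [swapDigits, hki, hkj]

lemma NoCarry.div_pow_mod_add_one_lt {Y : Fin d → ℕ} (hp : 0 < p) (hY : NoCarry p Y N)
    (hij : i ≠ j) {t : ℕ} (ht : Y j / p ^ t % p ≠ 0) : Y i / p ^ t % p + 1 < p := by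
  have := Finset.sum_le_sum_of_subset (f := fun k => Y k / p ^ t % p) (Finset.subset_univ {i, j})
  rw [Finset.sum_pair hij, hY.2 t] at this
  have := Nat.mod_lt (N / p ^ t) hp
  omega

lemma swapDigits_mem_Wset (hp : 1 < p) (hY : Y ∈ Wset p (p ^ f) d N) (hij : i < j)
    (hmn : m ≠ n) (hclass : m % f = n % f) (hm : Y i / p ^ m % p ≠ 0)
    (hn : Y j / p ^ n % p ≠ 0) : swapDigits p Y i j m n ∈ Wset p (p ^ f) d N := by
  have hp0 : 0 < p := by omega
  have hne : i ≠ j := hij.ne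
  have hpm := pow_le_of_div_pow_mod_ne_zero hm
  have hpn := pow_le_of_div_pow_mod_ne_zero hn
  set Y' := swapDigits p Y i j m n
  have hY'i : Y' i = Y i - p ^ m + p ^ n := swapDigits_apply_left hne
  have hY'j : Y' j = Y j - p ^ n + p ^ m := swapDigits_apply_right
  have hY'k : ∀ k, k ≠ i → k ≠ j → Y' k = Y k := fun _ => swapDigits_apply_of_ne
  have hsum : ∑ k, Y' k = N := by
    have := Fintype.sum_add_eq_sum_add_of_eq_of_ne hne hY'k
    rw [hY'i, hY'j, hY.1.1] at this
    omega
  have hcol : ∀ t, ∑ k, Y' k / p ^ t % p = N / p ^ t % p := fun t => by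
    have := Fintype.sum_add_eq_sum_add_of_eq_of_ne hne (g := fun k => Y k / p ^ t % p)
      (g' := fun k => Y' k / p ^ t % p) fun k hki hkj => by simp only [hY'k k hki hkj]
    have hdi := div_pow_mod_sub_pow_add_pow hp0 hmn hm
      (hY.1.div_pow_mod_add_one_lt hp0 hne hn) t
    have hdj := div_pow_mod_sub_pow_add_pow hp0 hmn.symm hn
      (hY.1.div_pow_mod_add_one_lt hp0 hne.symm hm) t
    simp only [hY'i, hY'j, hY.1.2 t] at this
    omega
  refine ⟨⟨hsum, hcol⟩, fun k hk => ?_⟩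
  obtain ⟨hposk, hdvdk⟩ := hY.2 k hk
  by_cases hki : k = i
  · subst hki
    exact ⟨hY'i ▸ Nat.add_pos_right _ (pow_pos hp0 n),
      hY'i ▸ dvd_sub_pow_add_pow hp0 hpm hclass hdvdk⟩
  by_cases hkj : k = j
  · subst hkj
    exact ⟨hY'j ▸ Nat.add_pos_right _ (pow_pos hp0 m),
      hY'j ▸ dvd_sub_pow_add_pow hp0 hpn hclass.symm hdvdk⟩
  exact hY'k k hki hkj ▸ ⟨hposk, hdvdk⟩

lemma gamma_swapDigits (hp : 1 < p) (hY : Y ∈ Wset p q d N)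
    (hY' : swapDigits p Y i j m n ∈ Wset p q d N) (hij : i ≠ j) (hmn : m ≠ n)
    (hclass : m % f = n % f) (hm : Y i / p ^ m % p ≠ 0) (hn : Y j / p ^ n % p ≠ 0)
    (k : Fin d) : Gamma p f (swapDigits p Y i j m n k) = Gamma p f (Y k) := by
  have hlt : ∀ {X : Fin d → ℕ}, X ∈ Wset p q d N → ∀ k, X k < p ^ N := fun hX k =>
    (le_of_mem_Wset hX k).trans_lt (Nat.lt_pow_self hp)
  have hY'lt := hlt hY' k
  by_cases hki : k = i
  · subst hki
    rw [swapDigits_apply_left hij] at hY'lt ⊢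
    exact gamma_sub_pow_add_pow hp hmn hclass hm (hY.1.div_pow_mod_add_one_lt (by omega) hij hn)
      (hlt hY k) hY'lt
  by_cases hkj : k = j
  · subst hkj
    rw [swapDigits_apply_right] at hY'lt ⊢
    exact gamma_sub_pow_add_pow hp hmn.symm hclass.symm hn
      (hY.1.div_pow_mod_add_one_lt (by omega) (Ne.symm hij) hm) (hlt hY k) hY'lt
  rw [swapDigits_apply_of_ne hki hkj]

lemma swapDigits_mem_WBset (hp : 1 < p) (hY : Y ∈ WBset p f d N B) (hij : i < j)
    (hmn : m ≠ n) (hclass : m % f = n % f) (hm : Y i / p ^ m % p ≠ 0)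
    (hn : Y j / p ^ n % p ≠ 0) : swapDigits p Y i j m n ∈ WBset p f d N B := by
  have hW' := swapDigits_mem_Wset hp hY.1 hij hmn hclass hm hn
  exact ⟨hW', fun k => (gamma_swapDigits hp hY.1 hW' hij.ne hmn hclass hm hn k).trans (hY.2 k)⟩

lemma lexLT_swapDigits (hp : 1 < p) (hij : i < j) (hmn : m < n) (hpm : p ^ m ≤ Y i) :
    LexLT Y (swapDigits p Y i j m n) := by
  refine ⟨i, fun k hk => (swapDigits_apply_of_ne hk.ne (hk.trans hij).ne).symm, ?_⟩
  rw [swapDigits_apply_left hij.ne]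
  have := Nat.pow_lt_pow_right hp hmn
  omega

lemma wtW_swapDigits_lt (hp : 1 < p) (hij : i < j) (hmn : m < n) (hpm : p ^ m ≤ Y i)
    (hpn : p ^ n ≤ Y j) : wtW (swapDigits p Y i j m n) < wtW Y := by
  have h := Fintype.sum_add_eq_sum_add_of_eq_of_ne hij.ne
    (g := fun k : Fin d => ((k : ℕ) + 1) * Y k)
    (g' := fun k : Fin d => ((k : ℕ) + 1) * swapDigits p Y i j m n k)
    fun k hki hkj => by rw [swapDigits_apply_of_ne hki hkj]
  simp only [swapDigits_apply_left hij.ne, swapDigits_apply_right] at h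
  obtain ⟨e, he, hnm⟩ : ∃ e, 0 < e ∧ p ^ n = p ^ m + e := ⟨p ^ n - p ^ m, by
    have := Nat.pow_lt_pow_right hp hmn; omega⟩
  obtain ⟨y, hy⟩ : ∃ y, Y j = y + e := ⟨Y j - e, by omega⟩
  have hi : Y i - p ^ m + p ^ n = Y i + e := by omega
  have hj : Y j - p ^ n + p ^ m = y := by omega
  have hmove : ((i : ℕ) + 1) * e < ((j : ℕ) + 1) * e :=
    Nat.mul_lt_mul_of_pos_right (by have : (i : ℕ) < j := hij; omega) he
  rw [hi, hj, hy] at h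
  unfold wtW
  nlinarith

lemma exists_lexLT_wtW_lt_of_not_tauMonotonic (hp : 1 < p) (hY : Y ∈ WBset p f d N B)
    (hτ : ¬ TauMonotonic p f Y) : ∃ Y' ∈ WBset p f d N B, LexLT Y Y' ∧ wtW Y' < wtW Y := by
  simp only [TauMonotonic, not_forall, not_le] at hτ
  obtain ⟨i, j, hij, m, n, hm, hn, hclass, hmn⟩ := hτ
  have hpm := pow_le_of_div_pow_mod_ne_zero hm
  have hpn := pow_le_of_div_pow_mod_ne_zero hn
  exact ⟨swapDigits p Y i j m n, swapDigits_mem_WBset hp hY hij hmn.ne hclass hm hn,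
    lexLT_swapDigits hp hij hmn hpm, wtW_swapDigits_lt hp hij hmn hpm hpn⟩

end Compositions

lemma lexLT_iff_toLex_lt {n : ℕ} {x y : Fin n → ℕ} : LexLT x y ↔ toLex x < toLex y :=
  Iff.rfl

lemma exists_tauMonotonic_of_nonempty {p f d N : ℕ} {B : Fin d → Fin f → ℕ} (hp : 1 < p)
    (hf : 0 < f) (hB : (WBset p f d N B).Nonempty) :
    ∃ Z ∈ WBset p f d N B, TauMonotonic p f Z ∧
      (∀ Y ∈ WBset p f d N B, TauMonotonic p f Y → Y = Z) ∧
      (∀ Y ∈ WBset p f d N B, Y ≠ Z → LexLT Y Z ∧ wtW Z < wtW Y) := by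
  set Z := Function.argminOn wtW _ hB
  have hZ : Z ∈ WBset p f d N B := Function.argminOn_mem wtW _ hB
  have hmin : ∀ Y ∈ WBset p f d N B, wtW Z ≤ wtW Y := fun _ hY =>
    Function.argminOn_le wtW _ hY
  have hτZ : TauMonotonic p f Z := by
    by_contra hτ
    obtain ⟨Y', hY', -, hlt⟩ := exists_lexLT_wtW_lt_of_not_tauMonotonic hp hZ hτ
    exact (hmin Y' hY').not_gt hlt
  have huniq : ∀ Y ∈ WBset p f d N B, TauMonotonic p f Y → Y = Z := fun Y hY hτY =>
    eq_of_tauMonotonic hp hf hY hZ hτY hτZ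
  refine ⟨Z, hZ, hτZ, huniq, fun Y hY hne => ?_⟩
  induction hw : wtW Y using Nat.strong_induction_on generalizing Y with
  | _ w ih =>
    obtain ⟨Y', hY', hlex, hlt⟩ :=
      exists_lexLT_wtW_lt_of_not_tauMonotonic hp hY fun hτY => hne (huniq Y hY hτY)
    rw [hw] at hlt
    refine ⟨?_, (hmin Y' hY').trans_lt hlt⟩
    rcases eq_or_ne Y' Z with rfl | hne'
    · exact hlex
    · exact lexLT_iff_toLex_lt.mpr <| (lexLT_iff_toLex_lt.mp hlex).trans
        (lexLT_iff_toLex_lt.mp (ih _ hlt Y' hY' hne' rfl).1)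

theorem tau_monotonic_unique_general
    (p f : ℕ) (hp : p.Prime) (hf : 0 < f) (N d : ℕ)
    (B : Fin d → Fin f → ℕ) (hB : (WBset p f d N B).Nonempty) :
    (∃ Z ∈ WBset p f d N B, TauMonotonic p f Z ∧
      (∀ Y ∈ WBset p f d N B, TauMonotonic p f Y → Y = Z) ∧
      (∀ Y ∈ WBset p f d N B, Y ≠ Z → LexLT Y Z ∧ wtW Z < wtW Y)) ∧
    (∀ Z : Fin d → ℕ, Modest p (p ^ f) N Z ∨ Optimal p (p ^ f) N Z →
      TauMonotonic p f Z) := by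
  refine ⟨exists_tauMonotonic_of_nonempty hp.one_lt hf hB, fun Z hZ => ?_⟩
  have hZB : Z ∈ WBset p f d N (fun j => Gamma p f (Z j)) :=
    ⟨hZ.elim (·.1) (·.1), fun _ => rfl⟩
  obtain ⟨Z₀, hZ₀, hτZ₀, -, hZ₀best⟩ :=
    exists_tauMonotonic_of_nonempty hp.one_lt hf ⟨Z, hZB⟩
  by_contra hτZ
  have hne : Z ≠ Z₀ := fun h => hτZ (h ▸ hτZ₀)
  obtain ⟨hlex, hwt⟩ := hZ₀best Z hZB hne
  rcases hZ with ⟨-, hmodest⟩ | ⟨-, hoptimal⟩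
  · rcases hmodest Z₀ hZ₀.1 with h | h
    · exact hne h.symm
    · exact lt_asymm (lexLT_iff_toLex_lt.mp hlex) (lexLT_iff_toLex_lt.mp h)
  · exact (hoptimal Z₀ hZ₀.1).not_gt hwt

/-- each `W_d^B(N)` (for a valid matrix `B`) contains a unique τ-monotonic
composition; it is lexicographically largest and of strictly smallest weight in `W_d^B(N)`.
In particular modest and optimal compositions are τ-monotonic. -/
theorem tau_monotonic_unique
    (p f : ℕ) (hp : p.Prime) (hf : 0 < f) (N d : ℕ) (hN : 0 < N) (hd : 0 < d)
    (B : Fin d → Fin f → ℕ) (hB : (WBset p f d N B).Nonempty) :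
    (∃ Z ∈ WBset p f d N B, TauMonotonic p f Z ∧
      (∀ Y ∈ WBset p f d N B, TauMonotonic p f Y → Y = Z) ∧
      (∀ Y ∈ WBset p f d N B, Y ≠ Z → LexLT Y Z ∧ wtW Z < wtW Y)) ∧
    (∀ Z : Fin d → ℕ, Modest p (p ^ f) N Z ∨ Optimal p (p ^ f) N Z →
      TauMonotonic p f Z) :=
  tau_monotonic_unique_general p f hp hf N d B hB
end

section
/- Let a, b ∈ ℝ^f and set u = E·a, v = E·b. Then: (i) if u > v (componentwise ≥ with u ≠ v) then a ≫ b (strict in every component); in particular, if u > 0 then a ≫ 0. (ii) If 0 < u < (p−1)·𝟙 componentwise (where 𝟙 is the all-ones vector), then 0 ≪ a ≪ 𝟙. -/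
open Polynomial

/-!
If `E b < E a`, then `c = a - b` satisfies `c i ≤ p * c (i + 1)` for every `i`, strictly for
some `i₀`. Chaining these inequalities once around the cycle from `i` through `i₀` back to `i`
gives `c i < p ^ N * c i` with `p ^ N > 1`, hence `c i > 0`. Part (ii) is part (i) applied to
the pairs `(a, 0)` and `(𝟙, a)`, since `E 0 = 0` and `E 𝟙 = (p - 1) 𝟙`.
-/

namespace Equiv.Perm

variable {ι R : Type*} [CommRing R] [LinearOrder R] [IsStrictOrderedRing R]
  {σ : Perm ι} {p : R} {c : ι → R}

theorem le_pow_mul_apply_pow_of_le_mul_apply (hp : 0 ≤ p) (hc : ∀ j, c j ≤ p * c (σ j))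
    (k : ℕ) (j : ι) : c j ≤ p ^ k * c ((σ ^ k) j) := by
  induction k with
  | zero => simp
  | succ k ih =>
    calc c j ≤ p ^ k * c ((σ ^ k) j) := ih
      _ ≤ p ^ k * (p * c (σ ((σ ^ k) j))) := by gcongr; exact hc _
      _ = p ^ (k + 1) * c ((σ ^ (k + 1)) j) := by rw [pow_succ' σ, mul_apply]; ring

theorem SameCycle.pos_of_le_mul_apply [Finite ι] {i i₀ : ι} (hi : σ.SameCycle i i₀)
    (hp : 1 < p) (hc : ∀ j, c j ≤ p * c (σ j)) (hlt : c i₀ < p * c (σ i₀)) : 0 < c i := by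
  have hp₀ : 0 ≤ p := zero_le_one.trans hp.le
  obtain ⟨m, hm⟩ := hi.exists_nat_pow_eq
  obtain ⟨r, hr⟩ := (sameCycle_apply_left.2 hi.symm).exists_nat_pow_eq
  have hcycle : c i < p ^ (m + 1 + r) * c i :=
    calc c i ≤ p ^ m * c i₀ := hm ▸ le_pow_mul_apply_pow_of_le_mul_apply hp₀ hc m i
      _ < p ^ m * (p * c (σ i₀)) := by gcongr
      _ ≤ p ^ m * (p * (p ^ r * c i)) := by
        gcongr; exact hr ▸ le_pow_mul_apply_pow_of_le_mul_apply hp₀ hc r (σ i₀)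
      _ = p ^ (m + 1 + r) * c i := by ring
  have hpow : 1 < p ^ (m + 1 + r) := one_lt_pow₀ hp (by omega)
  nlinarith

end Equiv.Perm

theorem sameCycle_finRotate {n : ℕ} (i j : Fin n) : (finRotate n).SameCycle i j := by
  rcases le_or_gt 2 n with hn | hn
  · have hsupp := support_finRotate_of_le hn
    exact (isCycle_finRotate_of_le hn).sameCycle
      (Equiv.Perm.mem_support.1 (hsupp ▸ Finset.mem_univ i))
      (Equiv.Perm.mem_support.1 (hsupp ▸ Finset.mem_univ j))
  · obtain rfl : i = j := Fin.ext (by omega)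
    exact Equiv.Perm.SameCycle.refl _ _

section Emap

variable {R : Type} [CommRing R] {p f : ℕ}

theorem Emap_apply (x : Fin f → R) (i : Fin f) :
    Emap p x i = p * x (finRotate f i) - x i := by
  have := i.neZero
  rw [Emap, finRotate_apply]
  congr 3
  ext
  simp [Fin.val_add]

@[simp]
theorem Emap_zero : Emap p (0 : Fin f → R) = 0 := by
  ext; simp [Emap]

@[simp]
theorem Emap_one : Emap p (1 : Fin f → R) = fun _ => (p : R) - 1 := by
  ext; simp [Emap]

theorem lt_of_Emap_lt [LinearOrder R] [IsStrictOrderedRing R] (hp : 1 < (p : R))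
    {a b : Fin f → R} (h : Emap p b < Emap p a) (i : Fin f) : b i < a i := by
  obtain ⟨hle, i₀, hlt⟩ := Pi.lt_def.1 h
  have hstep (j : Fin f) := hle j
  simp only [Emap_apply] at hstep hlt
  have := (sameCycle_finRotate i i₀).pos_of_le_mul_apply (c := a - b) hp
    (fun j => by simp only [Pi.sub_apply]; linarith [hstep j])
    (by simp only [Pi.sub_apply]; linarith)
  simpa using this

end Emap

theorem Emap_inverse_positivity_general
    (p f : ℕ) (hp : p.Prime) (a b : Fin f → ℝ) :
    (Emap p b < Emap p a → ∀ i, b i < a i) ∧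
    (0 < Emap p a → ∀ i, 0 < a i) ∧
    ((0 < Emap p a ∧ Emap p a < fun _ => (p : ℝ) - 1) → ∀ i, 0 < a i ∧ a i < 1) := by
  have hp₁ : 1 < (p : ℝ) := by exact_mod_cast hp.one_lt
  have hpos : 0 < Emap p a → ∀ i, 0 < a i := fun h =>
    lt_of_Emap_lt hp₁ (b := 0) (by rwa [Emap_zero])
  refine ⟨lt_of_Emap_lt hp₁, hpos, fun ⟨h₀, h₁⟩ i => ⟨hpos h₀ i, ?_⟩⟩
  exact lt_of_Emap_lt hp₁ (a := 1) (by rwa [Emap_one]) i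

/-- positivity properties of `E⁻¹`. -/
theorem Emap_inverse_positivity
    (p f : ℕ) (hp : p.Prime) (hf : 0 < f) (a b : Fin f → ℝ) :
    (Emap p b < Emap p a → ∀ i, b i < a i) ∧
    (0 < Emap p a → ∀ i, 0 < a i) ∧
    ((0 < Emap p a ∧ Emap p a < fun _ => (p : ℝ) - 1) → ∀ i, 0 < a i ∧ a i < 1) :=
  Emap_inverse_positivity_general p f hp a b
end

section
/- 𝔍 = (E·ℤ^f) ∩ (ℕ^f ∖ {0}); that is, a nonzero vector w ∈ ℕ^f equals Γ(n) for some q-even n > 0 if and only if w = E·a for some a ∈ ℤ^f. -/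
open Polynomial

section Aux

variable {p f : ℕ}

lemma aux_mod_pow_eq_sum (p n k : ℕ) :
    n % p ^ k = ∑ j ∈ Finset.range k, p ^ j * (n / p ^ j % p) := by
  induction k with
  | zero => simp [Nat.mod_one]
  | succ k ih => rw [Nat.mod_pow_succ, Finset.sum_range_succ, ih]

lemma aux_self_eq_sum (hp : 1 < p) (n : ℕ) :
    n = ∑ j ∈ Finset.range (Nat.log p n + 1), p ^ j * (n / p ^ j % p) := by
  rw [← aux_mod_pow_eq_sum]
  exact (Nat.mod_eq_of_lt (Nat.lt_pow_succ_log_self hp n)).symm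

lemma aux_pow_mod_dvd (p f j : ℕ) :
    ((p : ℤ) ^ f - 1) ∣ ((p : ℤ) ^ (j % f) - (p : ℤ) ^ j) := by
  have h : (p : ℤ) ^ j = (p : ℤ) ^ (j % f) * ((p : ℤ) ^ f) ^ (j / f) := by
    rw [← pow_mul, ← pow_add]
    congr 1
    exact (Nat.mod_add_div j f).symm
  rw [h]
  have h2 : ((p : ℤ) ^ f - 1) ∣ (((p : ℤ) ^ f) ^ (j / f) - 1 ^ (j / f)) :=
    sub_dvd_pow_sub_pow _ _ _
  have h3 : (p : ℤ) ^ (j % f) - (p : ℤ) ^ (j % f) * ((p : ℤ) ^ f) ^ (j / f)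
      = -((p : ℤ) ^ (j % f)) * (((p : ℤ) ^ f) ^ (j / f) - 1 ^ (j / f)) := by ring
  rw [h3]
  exact Dvd.dvd.mul_left h2 _

/-- Lemma A : `∑ Γ(n)_i p^i ≡ n mod (p^f - 1)`. -/
lemma aux_gamma_cong (hp : 1 < p) (hf : 0 < f) (n : ℕ) :
    ((p : ℤ) ^ f - 1) ∣ (∑ i : Fin f, (Gamma p f n i : ℤ) * (p : ℤ) ^ (i : ℕ)) - n := by
  have h1 : (∑ i : Fin f, (Gamma p f n i : ℤ) * (p : ℤ) ^ (i : ℕ))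
      = ∑ j ∈ Finset.range (Nat.log p n + 1),
          ((n / p ^ j % p : ℕ) : ℤ) * (p : ℤ) ^ (j % f) := by
    unfold Gamma
    push_cast
    simp only [Finset.sum_mul]
    rw [Finset.sum_comm]
    refine Finset.sum_congr rfl fun j _ => ?_
    rw [Fin.sum_univ_eq_sum_range
      (fun k => (if j % f = k then ((n : ℤ) / (p : ℤ) ^ j % (p : ℤ)) else 0) * (p : ℤ) ^ k) f]
    rw [Finset.sum_eq_single (j % f)]
    · simp
    · intro b _ hb
      simp [Ne.symm hb]
    · intro hmem
      exact absurd (Finset.mem_range.mpr (Nat.mod_lt _ hf)) hmem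
  have h2 : (n : ℤ) = ∑ j ∈ Finset.range (Nat.log p n + 1),
      ((n / p ^ j % p : ℕ) : ℤ) * (p : ℤ) ^ j := by
    conv_lhs => rw [aux_self_eq_sum hp n]
    push_cast
    refine Finset.sum_congr rfl fun j _ => ?_
    ring
  rw [h1, h2, ← Finset.sum_sub_distrib]
  refine Finset.dvd_sum fun j _ => ?_
  have : ((n / p ^ j % p : ℕ) : ℤ) * (p : ℤ) ^ (j % f)
      - ((n / p ^ j % p : ℕ) : ℤ) * (p : ℤ) ^ j
      = ((n / p ^ j % p : ℕ) : ℤ) * ((p : ℤ) ^ (j % f) - (p : ℤ) ^ j) := by ring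
  rw [this]
  exact Dvd.dvd.mul_left (aux_pow_mod_dvd p f j) _

end Aux

section Aux2
variable {p f : ℕ}

/-- Lemma C : adding a high power of `p` bumps `Γ`. -/
lemma aux_gamma_add_pow (hp : 1 < p) (hf : 0 < f) (n e : ℕ) (he : 0 < e) (hn : n < p ^ e) :
    Gamma p f (n + p ^ e)
      = fun i => Gamma p f n i + (if e % f = (i : ℕ) then 1 else 0) := by
  have hp0 : 0 < p := lt_trans one_pos hp
  have hlog : Nat.log p (n + p ^ e) = e := by
    refine Nat.log_eq_of_pow_le_of_lt_pow le_add_self ?_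
    have : n + p ^ e < p ^ e + p ^ e := by omega
    calc n + p ^ e < p ^ e + p ^ e := this
      _ ≤ p ^ e * p := by nlinarith [pow_pos hp0 e]
      _ = p ^ (e + 1) := by rw [pow_succ]
  funext i
  unfold Gamma
  rw [hlog, Finset.sum_range_succ]
  have hterm : (n + p ^ e) / p ^ e % p = 1 := by
    have h1 : (n + p ^ e) / p ^ e = 1 := by
      have : (n + p ^ e * 1) / p ^ e = n / p ^ e + 1 :=
        Nat.add_mul_div_left n 1 (pow_pos hp0 e)
      rw [Nat.div_eq_of_lt hn] at this
      simpa using this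
    rw [h1, Nat.mod_eq_of_lt hp]
  have hrest : ∀ j ∈ Finset.range e, (n + p ^ e) / p ^ j % p = n / p ^ j % p := by
    intro j hj
    rw [Finset.mem_range] at hj
    have hsplit : p ^ e = p ^ j * (p * p ^ (e - j - 1)) := by
      rw [← pow_succ']
      rw [← pow_add]
      congr 1
      omega
    rw [hsplit, Nat.add_mul_div_left _ _ (pow_pos hp0 j), Nat.mul_comm p,
      Nat.add_mul_mod_self_right]
  have hsum : (∑ j ∈ Finset.range e, if j % f = (i : ℕ) then (n + p ^ e) / p ^ j % p else 0)
      = ∑ j ∈ Finset.range (Nat.log p n + 1), if j % f = (i : ℕ) then n / p ^ j % p else 0 := by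
    rw [Finset.sum_congr rfl (fun j hj => by rw [hrest j hj])]
    symm
    refine Finset.sum_subset ?_ ?_
    · refine Finset.range_subset_range.mpr ?_
      rcases Nat.eq_zero_or_pos n with h0 | h0
      · simp [h0, Nat.log_zero_right]; omega
      · exact Nat.log_lt_of_lt_pow h0.ne' hn
    · intro j hj hnj
      rw [Finset.mem_range] at hj hnj
      have : n / p ^ j = 0 := by
        refine Nat.div_eq_of_lt ?_
        calc n < p ^ (Nat.log p n + 1) := Nat.lt_pow_succ_log_self hp n
          _ ≤ p ^ j := Nat.pow_le_pow_right hp0 (by omega)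
      simp [this]
  rw [hsum, hterm]

lemma aux_gamma_zero (hf : 0 < f) : Gamma p f 0 = 0 := by
  funext i
  unfold Gamma
  simp

/-- Lemma B : every tuple is `Γ(n)` for some `n`. -/
lemma aux_exists_gamma (hp : 1 < p) (hf : 0 < f) (w : Fin f → ℕ) :
    ∃ n : ℕ, Gamma p f n = w ∧ (w ≠ 0 → 0 < n) := by
  have hp0 : 0 < p := lt_trans one_pos hp
  suffices h : ∀ s : ℕ, ∀ w : Fin f → ℕ, (∑ i, w i) = s → ∃ n : ℕ, Gamma p f n = w ∧
      (w ≠ 0 → 0 < n) by exact h _ w rfl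
  intro s
  induction s using Nat.strong_induction_on with
  | _ s ih =>
    intro w hw
    rcases Nat.eq_zero_or_pos s with hs | hs
    · have hw0 : w = 0 := by
        funext i
        have := Finset.sum_eq_zero_iff.mp (hw.trans hs) i (Finset.mem_univ i)
        simpa using this
      exact ⟨0, by rw [aux_gamma_zero hf, hw0], fun h => absurd hw0 h⟩
    · have : ∃ i, 0 < w i := by
        by_contra h
        push_neg at h
        have : (∑ i, w i) = 0 := Finset.sum_eq_zero fun i _ => Nat.le_zero.mp (h i)
        omega
      obtain ⟨i, hi⟩ := this
      set w' := Function.update w i (w i - 1) with hw'def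
      have hsum2 : (∑ j, w j) = w i + ∑ j ∈ Finset.univ \ {i}, w j := by
        rw [Finset.sum_eq_sum_sdiff_singleton_add (Finset.mem_univ i)]
        ring
      have hs' : (∑ j, w' j) = s - 1 := by
        rw [hw'def, Finset.sum_update_of_mem (Finset.mem_univ i)]
        omega
      obtain ⟨n', hn', -⟩ := ih (s - 1) (by omega) w' hs'
      set e := (i : ℕ) + f * (Nat.log p n' + 1) with hedef
      have he : 0 < e := by
        have : 0 < f * (Nat.log p n' + 1) := Nat.mul_pos hf (Nat.succ_pos _)
        omega
      have hle : Nat.log p n' + 1 ≤ e := by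
        have : 1 * (Nat.log p n' + 1) ≤ f * (Nat.log p n' + 1) :=
          Nat.mul_le_mul_right _ hf
        omega
      have hne : n' < p ^ e :=
        lt_of_lt_of_le (Nat.lt_pow_succ_log_self hp n') (Nat.pow_le_pow_right hp0 hle)
      have hef : e % f = (i : ℕ) := by
        rw [hedef, Nat.add_mul_mod_self_left, Nat.mod_eq_of_lt i.isLt]
      refine ⟨n' + p ^ e, ?_, fun _ => by positivity⟩
      rw [aux_gamma_add_pow hp hf n' e he hne, hn']
      funext i'
      by_cases h : i' = i
      · subst h
        rw [hw'def]
        simp only [hef, Function.update_self, if_pos rfl]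
        exact Nat.sub_add_cancel hi
      · have hne2 : e % f ≠ (i' : ℕ) := by
          rw [hef]
          exact fun hc => h (Fin.ext hc.symm)
        rw [hw'def, if_neg hne2, Function.update_of_ne h]
        exact Nat.add_zero _

/-- Lemma D : `Γ(n) ≠ 0` for `n > 0`. -/
lemma aux_gamma_ne_zero (hp : 1 < p) (hf : 0 < f) {n : ℕ} (hn : 0 < n) :
    ∃ i : Fin f, Gamma p f n i ≠ 0 := by
  have hp0 : 0 < p := lt_trans one_pos hp
  set L := Nat.log p n with hL
  refine ⟨⟨L % f, Nat.mod_lt _ hf⟩, ?_⟩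
  have hd : 0 < n / p ^ L % p := by
    have h1 : 1 ≤ n / p ^ L := by
      rw [Nat.one_le_div_iff (pow_pos hp0 L)]
      exact Nat.pow_log_le_self p hn.ne'
    have h2 : n / p ^ L < p := by
      rw [Nat.div_lt_iff_lt_mul (pow_pos hp0 L)]
      calc n < p ^ (L + 1) := Nat.lt_pow_succ_log_self hp n
        _ = p * p ^ L := by rw [pow_succ]; ring
    rw [Nat.mod_eq_of_lt h2]
    exact h1
  have hG : Gamma p f n ⟨L % f, Nat.mod_lt _ hf⟩
      = ∑ j ∈ Finset.range (Nat.log p n + 1), if j % f = L % f then n / p ^ j % p else 0 :=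
    rfl
  have hmem : L ∈ Finset.range (Nat.log p n + 1) := Finset.mem_range.mpr (by omega)
  have hle := Finset.single_le_sum
    (f := fun j => if j % f = L % f then n / p ^ j % p else 0)
    (fun j _ => Nat.zero_le _) hmem
  simp only [if_pos rfl, if_true] at hle
  intro hc
  rw [hG] at hc
  rw [hc] at hle
  omega

end Aux2

section Aux3
variable {p f : ℕ}

lemma aux_sum_shift (f : ℕ) (g : ℕ → ℤ) (hg : ∀ j, g (j + f) = g j) (c : ℕ) :
    ∑ j ∈ Finset.range f, g (c + j) = ∑ j ∈ Finset.range f, g j := by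
  induction c with
  | zero => simp
  | succ c ih =>
    have h1 : ∑ j ∈ Finset.range f, g (c + 1 + j) = ∑ j ∈ Finset.range f, g (c + (j + 1)) :=
      Finset.sum_congr rfl fun j _ => by rw [show c + 1 + j = c + (j + 1) by omega]
    have h2 : (∑ j ∈ Finset.range f, g (c + (j + 1))) + g (c + 0)
        = ∑ j ∈ Finset.range (f + 1), g (c + j) :=
      (Finset.sum_range_succ' (fun j => g (c + j)) f).symm
    have h3 : ∑ j ∈ Finset.range (f + 1), g (c + j)
        = (∑ j ∈ Finset.range f, g (c + j)) + g (c + f) := Finset.sum_range_succ _ f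
    have h4 : g (c + f) = g (c + 0) := by rw [hg c, Nat.add_zero]
    have h5 := h2.trans h3
    rw [h4] at h5
    have h6 : ∑ j ∈ Finset.range f, g (c + (j + 1)) = ∑ j ∈ Finset.range f, g (c + j) :=
      add_right_cancel h5
    rw [h1, h6, ih]

/-- Forward Emap computation: the weighted sum of `Emap p a` telescopes. -/
lemma aux_emap_sum (hf : 0 < f) (a : Fin f → ℤ) :
    ∑ i : Fin f, (Emap p a i) * (p : ℤ) ^ (i : ℕ)
      = ((p : ℤ) ^ f - 1) * a ⟨0, hf⟩ := by
  set A : ℕ → ℤ := fun j => a ⟨j % f, Nat.mod_lt _ hf⟩ with hA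
  have hAeq : ∀ i : Fin f, A (i : ℕ) = a i := by
    intro i
    simp only [hA]
    congr 1
    exact Fin.ext (Nat.mod_eq_of_lt i.isLt)
  have hstep : ∀ i : Fin f, (Emap p a i) * (p : ℤ) ^ (i : ℕ)
      = A ((i : ℕ) + 1) * (p : ℤ) ^ ((i : ℕ) + 1) - A (i : ℕ) * (p : ℤ) ^ (i : ℕ) := by
    intro i
    show ((p : ℤ) * a ⟨((i : ℕ) + 1) % f, Nat.mod_lt _ i.pos⟩ - a i) * (p : ℤ) ^ (i : ℕ) = _
    rw [← hAeq i]
    have : a ⟨((i : ℕ) + 1) % f, Nat.mod_lt _ i.pos⟩ = A ((i : ℕ) + 1) := rfl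
    rw [this, pow_succ]
    ring
  rw [Finset.sum_congr rfl (fun i _ => hstep i)]
  rw [Fin.sum_univ_eq_sum_range (fun k => A (k + 1) * (p : ℤ) ^ (k + 1) - A k * (p : ℤ) ^ k) f]
  rw [Finset.sum_range_sub (fun k => A k * (p : ℤ) ^ k) f]
  have hAf : A f = A 0 := by simp [hA, Nat.mod_self, Nat.zero_mod]
  have hA0 : A 0 = a ⟨0, hf⟩ := congrArg a (Fin.ext (Nat.zero_mod f))
  rw [hAf, hA0]
  ring

/-- Lemma E : `w ∈ E ℤ^f` iff `(p^f - 1) ∣ ∑ w_i p^i`. -/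
lemma aux_emap_iff (hp : 1 < p) (hf : 0 < f) (w : Fin f → ℤ) :
    (∃ a : Fin f → ℤ, Emap p a = w) ↔
      ((p : ℤ) ^ f - 1) ∣ ∑ i : Fin f, w i * (p : ℤ) ^ (i : ℕ) := by
  constructor
  · rintro ⟨a, rfl⟩
    rw [aux_emap_sum hf a]
    exact Dvd.intro _ rfl
  · intro hdvd
    set Q : ℤ := (p : ℤ) ^ f - 1 with hQ
    have hQ0 : Q ≠ 0 := by
      have : (2 : ℤ) ≤ (p : ℤ) := by exact_mod_cast hp
      have : (2 : ℤ) ≤ (p : ℤ) ^ f := le_trans this (le_self_pow₀ (by omega) hf.ne')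
      omega
    set W : ℕ → ℤ := fun j => w ⟨j % f, Nat.mod_lt _ hf⟩ with hW
    have hWper : ∀ j, W (j + f) = W j := by
      intro j
      simp only [hW]
      congr 1
      exact Fin.ext (Nat.add_mod_right j f)
    have hWeq : ∀ i : Fin f, W (i : ℕ) = w i := by
      intro i
      simp only [hW]
      congr 1
      exact Fin.ext (Nat.mod_eq_of_lt i.isLt)
    -- the base sum
    have hbase : (∑ j ∈ Finset.range f, W j * (p : ℤ) ^ (j % f))
        = ∑ i : Fin f, w i * (p : ℤ) ^ (i : ℕ) := by
      rw [← Fin.sum_univ_eq_sum_range (fun j => W j * (p : ℤ) ^ (j % f)) f]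
      refine Finset.sum_congr rfl fun i _ => ?_
      rw [hWeq i, Nat.mod_eq_of_lt i.isLt]
    set S : ℕ → ℤ := fun c => ∑ j ∈ Finset.range f, W (c + j) * (p : ℤ) ^ j with hS
    have hSdvd : ∀ c, Q ∣ S c := by
      intro c
      have hg : ∀ j, (fun j => W j * (p : ℤ) ^ (j % f)) (j + f)
          = (fun j => W j * (p : ℤ) ^ (j % f)) j := by
        intro j
        simp only [hWper j, Nat.add_mod_right]
      have hshift : (∑ j ∈ Finset.range f, W (c + j) * (p : ℤ) ^ ((c + j) % f))
          = ∑ j ∈ Finset.range f, W j * (p : ℤ) ^ (j % f) :=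
        aux_sum_shift f (fun j => W j * (p : ℤ) ^ (j % f)) hg c
      have hd1 : Q ∣ (p : ℤ) ^ c * S c - ∑ j ∈ Finset.range f, W (c + j) * (p : ℤ) ^ ((c + j) % f) := by
        rw [hS, Finset.mul_sum, ← Finset.sum_sub_distrib]
        refine Finset.dvd_sum fun j _ => ?_
        have : (p : ℤ) ^ c * (W (c + j) * (p : ℤ) ^ j) - W (c + j) * (p : ℤ) ^ ((c + j) % f)
            = -(W (c + j)) * ((p : ℤ) ^ ((c + j) % f) - (p : ℤ) ^ (c + j)) := by
          rw [pow_add]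
          ring
        rw [this]
        exact Dvd.dvd.mul_left (aux_pow_mod_dvd p f (c + j)) _
      have hd2 : Q ∣ (p : ℤ) ^ c * S c := by
        rw [hshift, hbase] at hd1
        have := dvd_add hd1 hdvd
        simpa using this
      have hcop : IsCoprime Q ((p : ℤ) ^ c) := by
        refine IsCoprime.pow_right ?_
        refine ⟨-1, (p : ℤ) ^ (f - 1), ?_⟩
        have : (p : ℤ) ^ (f - 1) * (p : ℤ) = (p : ℤ) ^ f := by
          rw [← pow_succ]
          congr 1
          omega
        rw [hQ]
        linear_combination this
      exact hcop.dvd_of_dvd_mul_left hd2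
    have hSper : ∀ c, S (c + f) = S c := by
      intro c
      simp only [hS]
      refine Finset.sum_congr rfl fun j _ => ?_
      rw [Nat.add_right_comm, hWper]
    refine ⟨fun i => S (i : ℕ) / Q, ?_⟩
    funext i
    have hkey : ∀ c, Q * (S c / Q) = S c := fun c => Int.mul_ediv_cancel' (hSdvd c)
    apply mul_left_cancel₀ hQ0
    show Q * ((p : ℤ) * (S (((i : ℕ) + 1) % f) / Q) - S (i : ℕ) / Q) = Q * w i
    have hSmod : S (((i : ℕ) + 1) % f) = S ((i : ℕ) + 1) := by
      rcases Nat.lt_or_ge ((i : ℕ) + 1) f with h | h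
      · rw [Nat.mod_eq_of_lt h]
      · have hif : (i : ℕ) + 1 = f := by omega
        rw [hif, Nat.mod_self]
        have := hSper 0
        simpa using this.symm
    have hexp : Q * ((p : ℤ) * (S (((i : ℕ) + 1) % f) / Q) - S (i : ℕ) / Q)
        = (p : ℤ) * (Q * (S (((i : ℕ) + 1) % f) / Q)) - Q * (S (i : ℕ) / Q) := by ring
    rw [hexp, hkey, hkey, hSmod]
    -- p * S (i+1) - S i = Q * w i
    have htel : (p : ℤ) * S ((i : ℕ) + 1) - S (i : ℕ)
        = W ((i : ℕ) + f) * (p : ℤ) ^ f - W (i : ℕ) := by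
      have hps : (p : ℤ) * S ((i : ℕ) + 1)
          = ∑ j ∈ Finset.range f, W ((i : ℕ) + (j + 1)) * (p : ℤ) ^ (j + 1) := by
        rw [hS, Finset.mul_sum]
        refine Finset.sum_congr rfl fun j _ => ?_
        rw [pow_succ]
        have : (i : ℕ) + 1 + j = (i : ℕ) + (j + 1) := by omega
        rw [this]
        ring
      have h2 : (∑ j ∈ Finset.range f, W ((i : ℕ) + (j + 1)) * (p : ℤ) ^ (j + 1))
            + W ((i : ℕ) + 0) * (p : ℤ) ^ 0
          = ∑ j ∈ Finset.range (f + 1), W ((i : ℕ) + j) * (p : ℤ) ^ j :=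
        (Finset.sum_range_succ' (fun j => W ((i : ℕ) + j) * (p : ℤ) ^ j) f).symm
      have h3 : ∑ j ∈ Finset.range (f + 1), W ((i : ℕ) + j) * (p : ℤ) ^ j
          = S (i : ℕ) + W ((i : ℕ) + f) * (p : ℤ) ^ f := by
        rw [Finset.sum_range_succ]
      have h4 := h2.trans h3
      rw [hps]
      simp only [pow_zero, Nat.add_zero, mul_one] at h4
      linarith [h4]
    rw [htel, hWper, hWeq]
    rw [hQ]
    ring

end Aux3

/-- `𝔍 = (E ℤ^f) ∩ (ℕ^f \ {0})`. -/
theorem Jfrak_eq_EZ_inter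
    (p f : ℕ) (hp : p.Prime) (hf : 0 < f) :
    {w : Fin f → ℤ | ∃ n : ℕ, 0 < n ∧ (p ^ f - 1) ∣ n ∧
        (fun i => (Gamma p f n i : ℤ)) = w} =
      {w : Fin f → ℤ | ∃ a : Fin f → ℤ, Emap p a = w} ∩
        {w : Fin f → ℤ | (∀ i, 0 ≤ w i) ∧ w ≠ 0} := by
  have hp1 : 1 < p := hp.one_lt
  have hcast : ((p ^ f - 1 : ℕ) : ℤ) = (p : ℤ) ^ f - 1 := by
    have h1 : 1 ≤ p ^ f := Nat.one_le_pow f p (by omega)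
    rw [Nat.cast_sub h1]
    push_cast
    ring
  ext w
  simp only [Set.mem_setOf_eq, Set.mem_inter_iff]
  constructor
  · rintro ⟨n, hn, hdvd, rfl⟩
    refine ⟨?_, fun i => Int.natCast_nonneg _, ?_⟩
    · rw [aux_emap_iff hp1 hf]
      have h1 := aux_gamma_cong hp1 hf n
      have h2 : ((p : ℤ) ^ f - 1) ∣ (n : ℤ) := by
        rw [← hcast]
        exact Int.natCast_dvd_natCast.mpr hdvd
      have h3 := dvd_add h1 h2
      simpa using h3
    · obtain ⟨i, hi⟩ := aux_gamma_ne_zero hp1 hf hn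
      intro hc
      have h4 := congrFun hc i
      simp only [Pi.zero_apply, Int.natCast_eq_zero] at h4
      exact hi h4
  · rintro ⟨⟨a, ha⟩, hpos, hne⟩
    set w' : Fin f → ℕ := fun i => (w i).toNat with hw'
    have hwc : ∀ i, ((w' i : ℤ)) = w i := fun i => Int.toNat_of_nonneg (hpos i)
    obtain ⟨n, hg, hn⟩ := aux_exists_gamma hp1 hf w'
    have hw'ne : w' ≠ 0 := by
      intro h0
      apply hne
      funext i
      have h5 := congrFun h0 i
      rw [← hwc i, h5]
      rfl
    refine ⟨n, hn hw'ne, ?_, ?_⟩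
    · have hd1 : ((p : ℤ) ^ f - 1) ∣ ∑ i : Fin f, w i * (p : ℤ) ^ (i : ℕ) :=
        (aux_emap_iff hp1 hf w).mp ⟨a, ha⟩
      have hd2 := aux_gamma_cong hp1 hf n
      rw [hg] at hd2
      have hsums : (∑ i : Fin f, ((w' i : ℤ)) * (p : ℤ) ^ (i : ℕ))
          = ∑ i : Fin f, w i * (p : ℤ) ^ (i : ℕ) :=
        Finset.sum_congr rfl fun i _ => by rw [hwc i]
      rw [hsums] at hd2
      have hd3 : ((p : ℤ) ^ f - 1) ∣ (n : ℤ) := by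
        have := dvd_sub hd1 hd2
        simpa using this
      rw [← hcast] at hd3
      exact_mod_cast hd3
    · funext i
      rw [congrFun hg i]
      exact hwc i
end

section
/- For every integer m ≥ 1: (i) I_m = {u ∈ ℕ^f ∖ {0} : u = E·x for some x ∈ ℝ^f with min_{0 ≤ i ≤ f−1} x_i > m − 1}; (ii) J_m = {u ∈ ℕ^f ∖ {0} : u = E·a for some a ∈ ℝ^f with min_{0 ≤ i ≤ f−1} a_i = m}. -/
open Polynomial

/-!
Solving `E x = u` gives `x_i = S_i(u) / (q - 1)` with `S_i(u) = ∑_{j<f} p^j u_{i+j}`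
(`cyclicSum`). The map `Γ` hits every nonzero vector and satisfies `n ≡ S_0(Γ(n)) mod q - 1`,
so `𝔍` is the set of nonzero `u` with `E⁻¹ u` integral, and every element of `𝔍` has all
coordinates of `E⁻¹ u` at least `1`. This gives one inclusion for `I_m`. Conversely, if
`S_i(u) > c (q - 1)` for all `i`, one peels off some `w ≤ u` in `𝔍` with
`S_i(u - w) > (c - 1)(q - 1)`: `S(u - w)` is the least solution `M` of the congruences
`M ≡ S(u)` and inequalities `p M_{i+1} ≤ M_i + (q - 1) u_i`, and leastness forces
`M_i ≤ p M_{i+1}`, which is what makes `E M / (q - 1)` a vector between `0` and `u`.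
On `𝔍` the coordinates of `E⁻¹ u` are integers, which turns the description of `I_m`
into that of `J_m`.
-/

namespace Sheats

open Finset Fin.NatCast

variable {p f : ℕ}

section Emap

variable {R : Type} [Field R]

lemma Emap_apply [NeZero f] (x : Fin f → R) (i : Fin f) :
    Emap p x i = p * x (i + 1) - x i := by
  have hidx : (⟨((i : ℕ) + 1) % f, Nat.mod_lt _ i.pos⟩ : Fin f) = i + 1 := by
    ext; simp [Fin.val_add]
  simp only [Emap, hidx]

lemma Emap_sub (x y : Fin f → R) : Emap p (x - y) = Emap p x - Emap p y := by
  funext i; simp only [Emap, Pi.sub_apply]; ring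

lemma Emap_injective [NeZero f] (hp : (p : R) ^ f ≠ 1) :
    Function.Injective (Emap p : (Fin f → R) → Fin f → R) := by
  intro x y hxy
  have hz : ∀ i, (x - y) i = p * (x - y) (i + 1) := fun i => by
    have := congrFun (Emap_sub (p := p) x y) i
    rw [hxy, sub_self, Emap_apply, Pi.zero_apply] at this
    exact (sub_eq_zero.mp this).symm
  have hpow : ∀ (k : ℕ) i, (x - y) i = p ^ k * (x - y) (i + (k : Fin f)) := by
    intro k
    induction k with
    | zero => simp
    | succ k ih => intro i; rw [ih, hz, Nat.cast_succ, add_assoc, pow_succ, mul_assoc]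
  funext i
  have hi : ((p : R) ^ f - 1) * (x - y) i = 0 := by
    have := hpow f i
    rw [Fin.natCast_self, add_zero] at this
    rw [sub_mul, one_mul, ← this, sub_self]
  exact sub_eq_zero.mp ((mul_eq_zero.mp hi).resolve_left (sub_ne_zero.mpr hp))

lemma Emap_div_eq [NeZero f] (hp : (p : R) ^ f ≠ 1) {M r : Fin f → ℕ}
    (h : ∀ i, p * M (i + 1) + r i = M i + p ^ f * r i) :
    Emap p (fun i => (M i : R) / ((p : R) ^ f - 1)) = fun i => (r i : R) := by
  have hD : (p : R) ^ f - 1 ≠ 0 := sub_ne_zero.mpr hp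
  funext i
  have hi : (p : R) * M (i + 1) + r i = M i + p ^ f * r i := by
    exact_mod_cast congrArg (Nat.cast : ℕ → R) (h i)
  rw [Emap_apply, mul_div_assoc', div_sub_div_same, div_eq_iff hD]
  linear_combination hi

end Emap

lemma Gamma_zero : Gamma p f 0 = 0 := by
  funext i; simp [Gamma]

lemma Gamma_eq_sum_range (hp : 1 < p) {n L : ℕ} (hn : n < p ^ L) (i : Fin f) :
    Gamma p f n i = ∑ j ∈ range L, if j % f = (i : ℕ) then n / p ^ j % p else 0 := by
  have htail : ∀ A B, n < p ^ A → A ≤ B →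
      ∑ j ∈ range B, (if j % f = (i : ℕ) then n / p ^ j % p else 0) =
        ∑ j ∈ range A, if j % f = (i : ℕ) then n / p ^ j % p else 0 := by
    intro A B hA hAB
    refine (sum_subset (range_subset_range.mpr hAB) fun j _ hj => ?_).symm
    have hj : n < p ^ j :=
      hA.trans_le (Nat.pow_le_pow_right (by omega) (not_lt.mp (mem_range.not.mp hj)))
    simp [Nat.div_eq_of_lt hj]
  rw [Gamma, ← htail _ (max (Nat.log p n + 1) L) (Nat.lt_pow_succ_log_self hp n)
    (le_max_left _ _), htail L _ hn (le_max_right _ _)]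

lemma add_mul_pow_div_pow_mod (hp : 0 < p) (n a : ℕ) {j K : ℕ} (hj : j < K) :
    (n + a * p ^ K) / p ^ j % p = n / p ^ j % p := by
  have hK : a * p ^ K = a * p ^ (K - j - 1) * p * p ^ j := by
    rw [mul_assoc, mul_assoc, ← pow_succ', ← pow_add]
    congr 2
    omega
  rw [hK, Nat.add_mul_div_right _ _ (pow_pos hp j), Nat.add_mul_mod_self_right]

lemma leading_digit_induction (hp : 1 < p) {P : ℕ → Prop} (zero : P 0)
    (step : ∀ n a K, n < p ^ K → 0 < a → a < p → P n → P (n + a * p ^ K)) (n : ℕ) :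
    P n := by
  induction n using Nat.strong_induction_on with
  | _ n ih =>
    rcases Nat.eq_zero_or_pos n with rfl | hn
    · exact zero
    set K := Nat.log p n
    have hpK : 0 < p ^ K := pow_pos (by omega) K
    have hle : p ^ K ≤ n := Nat.pow_log_le_self p hn.ne'
    rw [← Nat.mod_add_div' n (p ^ K)]
    refine step _ _ K (Nat.mod_lt _ hpK) (Nat.div_pos hle hpK) ?_ (ih _ ?_)
    · rw [Nat.div_lt_iff_lt_mul hpK, ← pow_succ']
      exact Nat.lt_pow_succ_log_self hp n
    · exact (Nat.mod_lt _ hpK).trans_le hle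

lemma pow_modEq_pow_mod (hp : 0 < p) (K : ℕ) : p ^ K ≡ p ^ (K % f) [MOD p ^ f - 1] := by
  have h := ((Nat.modEq_sub (Nat.one_le_pow f p hp)).pow (K / f)).mul_right (p ^ (K % f))
  rwa [one_pow, one_mul, ← pow_mul, ← pow_add, Nat.div_add_mod] at h

variable [NeZero f]

def cyclicSum (p : ℕ) (u : Fin f → ℕ) (i : Fin f) : ℕ :=
  ∑ j ∈ range f, p ^ j * u (i + j)

lemma cyclicSum_succ (u : Fin f → ℕ) (i : Fin f) :
    p * cyclicSum p u (i + 1) + u i = cyclicSum p u i + p ^ f * u i := by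
  have h := (sum_range_succ (fun j => p ^ j * u (i + j)) f).symm.trans
    (sum_range_succ' (fun j => p ^ j * u (i + j)) f)
  simp only [Fin.natCast_self, add_zero, Nat.cast_succ, pow_succ, Nat.cast_zero, pow_zero,
    one_mul] at h
  rw [cyclicSum, cyclicSum, h, mul_sum]
  congr 1
  refine sum_congr rfl fun j _ => ?_
  rw [add_comm (j : Fin f) 1, ← add_assoc]
  ring

lemma cyclicSum_zero (i : Fin f) : cyclicSum p 0 i = 0 := by
  simp [cyclicSum]

lemma cyclicSum_add (u v : Fin f → ℕ) (i : Fin f) :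
    cyclicSum p (u + v) i = cyclicSum p u i + cyclicSum p v i := by
  simp only [cyclicSum, Pi.add_apply, mul_add, sum_add_distrib]

lemma cyclicSum_sum {ι : Type*} (s : Finset ι) (v : ι → Fin f → ℕ) (i : Fin f) :
    cyclicSum p (∑ j ∈ s, v j) i = ∑ j ∈ s, cyclicSum p (v j) i := by
  simp only [cyclicSum, Finset.sum_apply, mul_sum]
  exact sum_comm

lemma cyclicSum_single_zero (k : Fin f) (a : ℕ) :
    cyclicSum p (Pi.single k a) 0 = p ^ (k : ℕ) * a := by
  rw [cyclicSum, sum_eq_single_of_mem (k : ℕ) (mem_range.mpr k.isLt)]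
  · simp
  · intro j hj hjk
    rw [zero_add, Pi.single_eq_of_ne, mul_zero]
    intro h
    apply hjk
    rw [← h, Fin.val_natCast, Nat.mod_eq_of_lt (mem_range.mp hj)]

lemma cyclicSum_pos (hp : 0 < p) {u : Fin f → ℕ} (hu : u ≠ 0) (i : Fin f) :
    0 < cyclicSum p u i := by
  obtain ⟨k, hk⟩ := Function.ne_iff.mp hu
  have hmem : ((k - i : Fin f) : ℕ) ∈ range f := mem_range.mpr (k - i).isLt
  refine lt_of_lt_of_le ?_
    (single_le_sum (f := fun j : ℕ => p ^ j * u (i + j)) (fun _ _ => Nat.zero_le _) hmem)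
  rw [Fin.cast_val_eq_self, add_sub_cancel]
  exact Nat.mul_pos (pow_pos hp _) (Nat.pos_of_ne_zero hk)

lemma cyclicSum_lt_cyclicSum (hp : 0 < p) {u v : Fin f → ℕ} (h : v < u) (i : Fin f) :
    cyclicSum p v i < cyclicSum p u i := by
  obtain ⟨w, rfl⟩ := exists_add_of_le h.le
  have hw : w ≠ 0 := by rintro rfl; simp at h
  rw [cyclicSum_add]
  exact Nat.lt_add_of_pos_right (cyclicSum_pos hp hw i)

lemma Emap_cyclicSum_div {R : Type} [Field R] (hp : (p : R) ^ f ≠ 1) (u : Fin f → ℕ) :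
    Emap p (fun i => (cyclicSum p u i : R) / ((p : R) ^ f - 1)) = fun i => (u i : R) :=
  Emap_div_eq hp fun i => cyclicSum_succ u i

lemma natCast_eq_Emap_iff {R : Type} [Field R] (hp : (p : R) ^ f ≠ 1) (u : Fin f → ℕ)
    (x : Fin f → R) :
    (fun i => (u i : R)) = Emap p x ↔ x = fun i => (cyclicSum p u i : R) / ((p : R) ^ f - 1) := by
  rw [← Emap_cyclicSum_div hp u, (Emap_injective hp).eq_iff, eq_comm]

lemma natCast_pow_ne_one (hp : 1 < p) : (p : ℝ) ^ f ≠ 1 :=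
  (one_lt_pow₀ (by exact_mod_cast hp) (NeZero.ne f)).ne'

lemma cyclicSum_eq_of_mul_succ (hp : 1 < p) {M r : Fin f → ℕ}
    (h : ∀ i, p * M (i + 1) + r i = M i + p ^ f * r i) : cyclicSum p r = M := by
  have hp' := natCast_pow_ne_one (f := f) hp
  have hdiv := Emap_injective hp' ((Emap_div_eq hp' h).trans (Emap_cyclicSum_div hp' r).symm)
  funext i
  have hi := congrFun hdiv i
  rw [div_left_inj' (sub_ne_zero.mpr hp')] at hi
  exact_mod_cast hi.symm

lemma coprime_pow_sub_one (hp : 0 < p) : Nat.Coprime p (p ^ f - 1) :=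
  ((Nat.coprime_self_sub_right (Nat.one_le_pow _ _ hp)).mpr
    (Nat.coprime_one_right _)).coprime_dvd_left (dvd_pow_self p (NeZero.ne f))

lemma mul_cyclicSum_succ (hp : 0 < p) (u : Fin f → ℕ) (i : Fin f) :
    p * cyclicSum p u (i + 1) = cyclicSum p u i + (p ^ f - 1) * u i := by
  have hpf : p ^ f = (p ^ f - 1) + 1 := (Nat.sub_add_cancel (Nat.one_le_pow _ _ hp)).symm
  have hsucc := cyclicSum_succ (p := p) u i
  rw [hpf] at hsucc
  linarith

lemma dvd_cyclicSum_succ_iff (hp : 0 < p) (u : Fin f → ℕ) (i : Fin f) :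
    p ^ f - 1 ∣ cyclicSum p u (i + 1) ↔ p ^ f - 1 ∣ cyclicSum p u i := by
  rw [← (coprime_pow_sub_one hp).symm.dvd_mul_left, mul_cyclicSum_succ hp,
    Nat.dvd_add_left (dvd_mul_right _ _)]

lemma dvd_cyclicSum_iff (hp : 0 < p) (u : Fin f → ℕ) (i j : Fin f) :
    p ^ f - 1 ∣ cyclicSum p u j ↔ p ^ f - 1 ∣ cyclicSum p u i := by
  have key (k : ℕ) : p ^ f - 1 ∣ cyclicSum p u (i + k) ↔ p ^ f - 1 ∣ cyclicSum p u i := by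
    induction k with
    | zero => simp
    | succ k ih => rw [Nat.cast_succ, ← add_assoc, dvd_cyclicSum_succ_iff hp, ih]
  simpa using key (j - i : Fin f)

lemma Gamma_add_mul_pow (hp : 1 < p) {n a K : ℕ} (hn : n < p ^ K) (ha : a < p) :
    Gamma p f (n + a * p ^ K) = Gamma p f n + Pi.single (K : Fin f) a := by
  have hpK : 0 < p ^ K := pow_pos (by omega) K
  have hsum : n + a * p ^ K < p ^ (K + 1) :=
    calc n + a * p ^ K < (a + 1) * p ^ K := by linarith
      _ ≤ p ^ (K + 1) := by rw [pow_succ']; exact Nat.mul_le_mul_right _ ha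
  have hn' : n < p ^ (K + 1) := hn.trans (Nat.pow_lt_pow_right hp K.lt_succ_self)
  funext i
  rw [Pi.add_apply, Gamma_eq_sum_range hp hsum, Gamma_eq_sum_range hp hn', sum_range_succ,
    sum_range_succ, Nat.add_mul_div_right _ _ hpK, Nat.div_eq_of_lt hn,
    sum_congr rfl fun j hj => by rw [add_mul_pow_div_pow_mod (by omega) n a (mem_range.mp hj)]]
  simp only [zero_add, Nat.mod_eq_of_lt ha, Nat.zero_mod, ite_self, add_zero, Pi.single_apply,
    Fin.ext_iff, Fin.val_natCast, eq_comm]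

lemma Gamma_ne_zero (hp : 1 < p) {n : ℕ} (hn : 0 < n) : Gamma p f n ≠ 0 := by
  induction n using leading_digit_induction hp with
  | zero => omega
  | step n a K hlt ha hap _ =>
    rw [Gamma_add_mul_pow hp hlt hap]
    intro h
    have := congrFun h (K : Fin f)
    simp only [Pi.add_apply, Pi.single_eq_same, Pi.zero_apply] at this
    omega

lemma modEq_cyclicSum_Gamma (hp : 1 < p) (n : ℕ) :
    n ≡ cyclicSum p (Gamma p f n) 0 [MOD p ^ f - 1] := by
  induction n using leading_digit_induction hp with
  | zero => rw [Gamma_zero, cyclicSum_zero]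
  | step n a K hn _ hap ih =>
    rw [Gamma_add_mul_pow hp hn hap, cyclicSum_add, cyclicSum_single_zero, Fin.val_natCast,
      mul_comm _ a]
    exact ih.add ((pow_modEq_pow_mod (by omega) K).mul_left a)

lemma exists_Gamma_eq_add_single (hp : 1 < p) (n : ℕ) (i : Fin f) (b : ℕ) :
    ∃ n', Gamma p f n' = Gamma p f n + Pi.single i b := by
  induction b with
  | zero => exact ⟨n, by simp⟩
  | succ b ih =>
    obtain ⟨n', hn'⟩ := ih
    have hlt : n' < p ^ (f * n' + i) :=
      (Nat.lt_pow_self hp).trans_le (Nat.pow_le_pow_right (by omega)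
        ((Nat.le_mul_of_pos_left n' (NeZero.pos f)).trans (Nat.le_add_right _ _)))
    have hi : ((f * n' + i : ℕ) : Fin f) = i := by
      ext; rw [Fin.val_natCast, Nat.mul_add_mod, Nat.mod_eq_of_lt i.isLt]
    refine ⟨n' + 1 * p ^ (f * n' + i), ?_⟩
    rw [Gamma_add_mul_pow hp hlt hp, hn', hi, add_assoc, ← Pi.single_add]

lemma exists_Gamma_eq (hp : 1 < p) (u : Fin f → ℕ) : ∃ n, Gamma p f n = u := by
  have key : ∀ s : Finset (Fin f), ∃ n, Gamma p f n = ∑ i ∈ s, Pi.single i (u i) := by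
    intro s
    induction s using Finset.induction_on with
    | empty => exact ⟨0, by simp [Gamma_zero]⟩
    | insert i s hi ih =>
      obtain ⟨n, hn⟩ := ih
      obtain ⟨n', hn'⟩ := exists_Gamma_eq_add_single hp n i (u i)
      exact ⟨n', by rw [hn', hn, sum_insert hi, add_comm]⟩
  simpa only [Finset.univ_sum_single] using key univ

lemma exists_pos_Gamma_eq_iff (hp : 1 < p) (u : Fin f → ℕ) :
    (∃ n, 0 < n ∧ Gamma p f n = u) ↔ u ≠ 0 := by
  constructor
  · rintro ⟨n, hn, rfl⟩
    exact Gamma_ne_zero hp hn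
  · intro hu
    obtain ⟨n, rfl⟩ := exists_Gamma_eq hp u
    exact ⟨n, Nat.pos_of_ne_zero fun h => hu (h ▸ Gamma_zero), rfl⟩

lemma mem_Jfrak_iff (hp : 1 < p) (u : Fin f → ℕ) :
    u ∈ Jfrak p f ↔ u ≠ 0 ∧ p ^ f - 1 ∣ cyclicSum p u 0 := by
  constructor
  · rintro ⟨n, hn, hdvd, rfl⟩
    exact ⟨Gamma_ne_zero hp hn, ((modEq_cyclicSum_Gamma hp n).dvd_iff dvd_rfl).mp hdvd⟩
  · rintro ⟨hu, hdvd⟩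
    obtain ⟨n, hn, rfl⟩ := (exists_pos_Gamma_eq_iff hp u).mpr hu
    exact ⟨n, hn, ((modEq_cyclicSum_Gamma hp n).dvd_iff dvd_rfl).mpr hdvd, rfl⟩

/-- A relaxation of `Z = cyclicSum p r` with `r ≤ u` and `cyclicSum p (u - r) ≡ 0`: the least
admissible vector is of this form (`exists_le_cyclicSum_eq`). -/
def Admissible (p : ℕ) (u : Fin f → ℕ) (b : ℕ) (Z : Fin f → ℕ) : Prop :=
  ∀ i, Z i ≡ cyclicSum p u i [MOD p ^ f - 1] ∧ b < Z i ∧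
    p * Z (i + 1) ≤ Z i + (p ^ f - 1) * u i

variable {u : Fin f → ℕ} {b : ℕ}

lemma admissible_cyclicSum_sub (hp : 0 < p) (hu : ∀ i, b + (p ^ f - 1) < cyclicSum p u i) :
    Admissible p u b fun i => cyclicSum p u i - (p ^ f - 1) := by
  intro i
  dsimp only
  have hle : ∀ j, p ^ f - 1 ≤ cyclicSum p u j := fun j => by have := hu j; omega
  refine ⟨(Nat.modEq_iff_dvd' (Nat.sub_le _ _)).mpr (by rw [Nat.sub_sub_self (hle i)]),
    by have := hu i; omega, ?_⟩
  have hsucc := mul_cyclicSum_succ hp u i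
  have hpQ : p ^ f - 1 ≤ p * (p ^ f - 1) := Nat.le_mul_of_pos_left _ hp
  have := hle (i + 1)
  rw [Nat.mul_sub]
  omega

lemma exists_least_admissible {Z₀ : Fin f → ℕ} (h₀ : Admissible p u b Z₀) :
    ∃ M, Admissible p u b M ∧ ∀ Z, Admissible p u b Z → M ≤ Z := by
  set M : Fin f → ℕ := fun i => sInf {v | ∃ Z, Admissible p u b Z ∧ Z i = v}
  have hattain : ∀ i, M i ∈ {v | ∃ Z, Admissible p u b Z ∧ Z i = v} :=
    fun i => Nat.sInf_mem ⟨Z₀ i, Z₀, h₀, rfl⟩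
  have hle : ∀ Z, Admissible p u b Z → M ≤ Z := fun Z hZ i => Nat.sInf_le ⟨Z, hZ, rfl⟩
  refine ⟨M, fun i => ?_, hle⟩
  obtain ⟨Z, hZ, hZi⟩ := hattain i
  refine ⟨hZi ▸ (hZ i).1, hZi ▸ (hZ i).2.1, ?_⟩
  calc p * M (i + 1) ≤ p * Z (i + 1) := Nat.mul_le_mul_left _ (hle Z hZ _)
    _ ≤ Z i + (p ^ f - 1) * u i := (hZ i).2.2
    _ = M i + (p ^ f - 1) * u i := by rw [hZi]

lemma Admissible.mul_succ_modEq (hp : 0 < p) {M : Fin f → ℕ} (hM : Admissible p u b M)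
    (i : Fin f) : p * M (i + 1) ≡ cyclicSum p u i [MOD p ^ f - 1] := by
  have h := (hM (i + 1)).1.mul_left p
  rw [mul_cyclicSum_succ hp] at h
  exact h.trans (Nat.add_mul_mod_self_left _ _ _)

/-- Lowering one coordinate of `M` to `p * M (i + 1)` keeps it admissible. -/
lemma Admissible.le_mul_succ (hp : 0 < p) {M : Fin f → ℕ} (hM : Admissible p u b M)
    (hleast : ∀ Z, Admissible p u b Z → M ≤ Z) (i : Fin f) : M i ≤ p * M (i + 1) := by
  by_contra! hlt
  have hsucc : i + 1 ≠ i := fun h => by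
    rw [h] at hlt; exact absurd hlt (not_lt.mpr (Nat.le_mul_of_pos_left _ hp))
  set Z := Function.update M i (p * M (i + 1))
  have hZM : Z ≤ M := fun k => by
    rcases eq_or_ne k i with rfl | hk
    · simpa [Z] using hlt.le
    · simp [Z, hk]
  have hZ : Admissible p u b Z := by
    intro k
    rcases eq_or_ne k i with rfl | hk
    · simp only [Z, Function.update_self, Function.update_of_ne hsucc]
      exact ⟨hM.mul_succ_modEq hp k, (hM (k + 1)).2.1.trans_le (Nat.le_mul_of_pos_left _ hp),
        Nat.le_add_right _ _⟩
    · simp only [Z, Function.update_of_ne hk]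
      exact ⟨(hM k).1, (hM k).2.1,
        (Nat.mul_le_mul_left p (hZM (k + 1))).trans (hM k).2.2⟩
  have := hleast Z hZ i
  simp only [Z, Function.update_self] at this
  omega

lemma exists_le_cyclicSum_eq (hp : 1 < p) {M : Fin f → ℕ} (hM : Admissible p u b M)
    (hmul : ∀ i, M i ≤ p * M (i + 1)) : ∃ r ≤ u, cyclicSum p r = M := by
  have hQ : 0 < p ^ f - 1 := Nat.sub_pos_of_lt (Nat.one_lt_pow (NeZero.ne f) hp)
  have hdvd : ∀ i, p ^ f - 1 ∣ p * M (i + 1) - M i := fun i =>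
    (Nat.modEq_iff_dvd' (hmul i)).mp ((hM.mul_succ_modEq (by omega) i).trans (hM i).1.symm).symm
  set r : Fin f → ℕ := fun i => (p * M (i + 1) - M i) / (p ^ f - 1)
  have hr : ∀ i, r i * (p ^ f - 1) = p * M (i + 1) - M i := fun i => Nat.div_mul_cancel (hdvd i)
  refine ⟨r, fun i => ?_, cyclicSum_eq_of_mul_succ hp fun i => ?_⟩
  · refine Nat.le_of_mul_le_mul_right ?_ hQ
    have := (hM i).2.2
    rw [hr, mul_comm (u i)]
    omega
  · have hpf : p ^ f = (p ^ f - 1) + 1 := (Nat.sub_add_cancel (Nat.one_le_pow _ _ (by omega))).symm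
    have := hr i
    have := hmul i
    rw [hpf, add_mul, one_mul, mul_comm (p ^ f - 1)]
    omega

lemma exists_le_sub_mem_Jfrak (hp : 1 < p) (hu : ∀ i, b + (p ^ f - 1) < cyclicSum p u i) :
    ∃ r ≤ u, u - r ∈ Jfrak p f ∧ ∀ i, b < cyclicSum p r i := by
  obtain ⟨M, hM, hleast⟩ := exists_least_admissible (admissible_cyclicSum_sub (by omega) hu)
  obtain ⟨r, hru, hrM⟩ := exists_le_cyclicSum_eq hp hM (hM.le_mul_succ (by omega) hleast)
  have hsum : ∀ i, cyclicSum p (u - r) i + M i = cyclicSum p u i := fun i => by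
    rw [← hrM, ← cyclicSum_add, tsub_add_cancel_of_le hru]
  have hMu : M 0 ≤ cyclicSum p u 0 - (p ^ f - 1) :=
    hleast _ (admissible_cyclicSum_sub (by omega) hu) 0
  have hQ := hu 0
  refine ⟨r, hru, (mem_Jfrak_iff hp _).mpr ⟨fun h => ?_, ?_⟩, fun i => hrM ▸ (hM i).2.1⟩
  · have := hsum 0
    rw [h, cyclicSum_zero] at this
    have := Nat.one_lt_pow (NeZero.ne f) hp
    omega
  · have h := (Nat.modEq_iff_dvd' (hMu.trans (Nat.sub_le _ _))).mp (hM 0).1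
    rwa [← hsum 0, Nat.add_sub_cancel] at h

lemma exists_sum_mem_Jfrak_lt (hp : 1 < p) (d : ℕ) (u : Fin f → ℕ)
    (hu : ∀ i, d * (p ^ f - 1) < cyclicSum p u i) :
    ∃ v : Fin d → Fin f → ℕ, (∀ j, v j ∈ Jfrak p f) ∧ ∑ j, v j < u := by
  induction d generalizing u with
  | zero =>
    refine ⟨Fin.elim0, fun j => j.elim0, ?_⟩
    rw [univ_eq_empty, sum_empty, pos_iff_ne_zero]
    rintro rfl
    simpa [cyclicSum_zero] using hu 0
  | succ d ih =>
    obtain ⟨r, hru, hJ, hr⟩ := exists_le_sub_mem_Jfrak (b := d * (p ^ f - 1)) hp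
      fun i => by rw [← add_one_mul]; exact hu i
    obtain ⟨v, hv, hvr⟩ := ih r hr
    refine ⟨Fin.cons (u - r) v, Fin.cases hJ hv, ?_⟩
    rw [Fin.sum_cons]
    calc u - r + ∑ j, v j < u - r + r := (add_lt_add_iff_left _).mpr hvr
      _ = u := tsub_add_cancel_of_le hru

lemma le_cyclicSum_of_mem_Jfrak (hp : 1 < p) {v : Fin f → ℕ} (hv : v ∈ Jfrak p f)
    (i : Fin f) : p ^ f - 1 ≤ cyclicSum p v i := by
  obtain ⟨hv0, hdvd⟩ := (mem_Jfrak_iff hp v).mp hv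
  exact Nat.le_of_dvd (cyclicSum_pos (by omega) hv0 i)
    ((dvd_cyclicSum_iff (by omega) v 0 i).mpr hdvd)

lemma mem_Iset_succ_iff (hp : 1 < p) (d : ℕ) (u : Fin f → ℕ) :
    u ∈ Iset p f (d + 1) ↔ u ≠ 0 ∧ ∀ i, d * (p ^ f - 1) < cyclicSum p u i := by
  simp only [Iset, Set.mem_ofPred_eq, exists_pos_Gamma_eq_iff hp]
  refine and_congr_right fun _ => ⟨fun ⟨v, hv, hvu⟩ i => ?_, exists_sum_mem_Jfrak_lt hp d u⟩
  calc d * (p ^ f - 1) = #(univ : Finset (Fin d)) • (p ^ f - 1) := by simp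
    _ ≤ ∑ j, cyclicSum p (v j) i :=
      card_nsmul_le_sum _ _ _ fun j _ => le_cyclicSum_of_mem_Jfrak hp (hv j) i
    _ = cyclicSum p (∑ j, v j) i := (cyclicSum_sum _ _ _).symm
    _ < cyclicSum p u i := cyclicSum_lt_cyclicSum (by omega) hvu i

lemma mem_Jset_succ_iff (hp : 1 < p) (d : ℕ) (u : Fin f → ℕ) :
    u ∈ Jset p f (d + 1) ↔ u ≠ 0 ∧ (∀ i, (d + 1) * (p ^ f - 1) ≤ cyclicSum p u i) ∧
      ∃ i, cyclicSum p u i = (d + 1) * (p ^ f - 1) := by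
  have hQ : 0 < p ^ f - 1 := Nat.sub_pos_of_lt (Nat.one_lt_pow (NeZero.ne f) hp)
  simp only [Jset, Nat.add_one_ne_zero, if_false, Set.mem_inter_iff, Set.mem_sdiff,
    mem_Iset_succ_iff hp, mem_Jfrak_iff hp]
  constructor
  · rintro ⟨⟨hu, hdvd⟩, ⟨-, hlt⟩, hnot⟩
    have hge : ∀ i, (d + 1) * (p ^ f - 1) ≤ cyclicSum p u i := fun i => by
      obtain ⟨c, hc⟩ := (dvd_cyclicSum_iff (by omega) u 0 i).mpr hdvd
      have := hlt i
      rw [hc, mul_comm] at this ⊢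
      exact Nat.mul_le_mul_left _ (Nat.lt_of_mul_lt_mul_left this)
    simp only [not_and, not_forall, not_lt] at hnot
    obtain ⟨i, hi⟩ := hnot hu
    exact ⟨hu, hge, i, le_antisymm hi (hge i)⟩
  · rintro ⟨hu, hge, i, hi⟩
    refine ⟨⟨hu, (dvd_cyclicSum_iff (by omega) u i 0).mpr (hi ▸ dvd_mul_left _ _)⟩,
      ⟨hu, fun j => lt_of_lt_of_le ?_ (hge j)⟩, fun ⟨_, h⟩ => (h i).ne' hi⟩
    exact Nat.mul_lt_mul_of_pos_right (Nat.lt_succ_self d) hQ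

end Sheats

/-- Sheats: characterization of `I_m` and `J_m` via `E`. -/
theorem Iset_Jset_characterization
    (p f : ℕ) (hp : p.Prime) (hf : 0 < f) (m : ℕ) (hm : 1 ≤ m) :
    (Iset p f m = {u : Fin f → ℕ | u ≠ 0 ∧ ∃ x : Fin f → ℝ,
        (fun i => (u i : ℝ)) = Emap p x ∧ ∀ i, (m : ℝ) - 1 < x i}) ∧
    (Jset p f m = {u : Fin f → ℕ | u ≠ 0 ∧ ∃ a : Fin f → ℝ,
        (fun i => (u i : ℝ)) = Emap p a ∧ (∀ i, (m : ℝ) ≤ a i) ∧ ∃ i, a i = (m : ℝ)}) := by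
  have : NeZero f := ⟨hf.ne'⟩
  obtain ⟨d, rfl⟩ : ∃ d, m = d + 1 := ⟨m - 1, by omega⟩
  have hQ : (0 : ℝ) < ((p ^ f - 1 : ℕ) : ℝ) :=
    Nat.cast_pos.mpr (Nat.sub_pos_of_lt (Nat.one_lt_pow hf.ne' hp.one_lt))
  have hD : (p : ℝ) ^ f - 1 = ((p ^ f - 1 : ℕ) : ℝ) := by
    rw [Nat.cast_sub (Nat.one_le_pow _ _ hp.pos)]; push_cast; ring
  simp only [Sheats.natCast_eq_Emap_iff (Sheats.natCast_pow_ne_one hp.one_lt), exists_eq_left, hD,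
    Nat.cast_add, Nat.cast_one, add_sub_cancel_right]
  constructor
  · ext u
    rw [Sheats.mem_Iset_succ_iff hp.one_lt]
    simp only [Set.mem_ofPred_eq, lt_div_iff₀ hQ]
    norm_cast
  · ext u
    rw [Sheats.mem_Jset_succ_iff hp.one_lt]
    simp only [Set.mem_ofPred_eq, le_div_iff₀ hQ, div_eq_iff hQ.ne']
    norm_cast
end
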